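/- arXiv:2104.09130 — 8 statements merged into one kernel-verified Lean document; each statement's English description precedes it below -/
import Mathlib

section
/- Under AV, adding approvals for candidates other than the preferred candidate is never beneficial: let (C,V) be an approval election, p ∈ C, and 1 ≤ k ≤ |C|. If applying a finite set A of approval additions (each adding some candidate to some vote that does not already approve it) results in an election in which p belongs to some AV-winning committee of size k, then applying only the additions in A that add an approval for p also results in an election in which p belongs to some AV-winning committee of size k. -/
/-- The AV score of candidate `c`: the number of voters approving `c`. -/
def avScore {C : Type*} [DecidableEq C] {n : ℕ} (V : Fin n → Finset C) (c : C) : ℕ :=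
  (Finset.univ.filter (fun i => c ∈ V i)).card

/-- `W` is an AV-winning committee of size `k`: it has `k` members and every member's AV score
is at least as large as every non-member's. -/
def AVWinning {C : Type*} [DecidableEq C] {n : ℕ}
    (V : Fin n → Finset C) (k : ℕ) (W : Finset C) : Prop :=
  W.card = k ∧ ∀ c ∈ W, ∀ d ∉ W, avScore V d ≤ avScore V c

/-- Apply a set `A` of approval additions (pairs (voter, candidate)) to the votes. -/
def applyAdds {C : Type*} [DecidableEq C] {n : ℕ} (V : Fin n → Finset C)
    (A : Finset (Fin n × C)) : Fin n → Finset C :=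
  fun i => V i ∪ (A.filter (fun a => a.1 = i)).image Prod.snd

/-- Any "dominating" set `B` of size ≤ `|C| - m`... extend `B` by `m` top candidates. -/
lemma extend_committee {C : Type*} [Fintype C] [DecidableEq C] (f : C → ℕ) :
    ∀ (m : ℕ) (B : Finset C), B.card + m ≤ Fintype.card C →
      (∀ b ∈ B, ∀ d ∉ B, f d ≤ f b) →
      ∃ W : Finset C, B ⊆ W ∧ W.card = B.card + m ∧ ∀ c ∈ W, ∀ d ∉ W, f d ≤ f c := by
  intro m
  induction m with
  | zero => intro B hc hdom; exact ⟨B, subset_rfl, by simp, hdom⟩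
  | succ m ih =>
    intro B hc hdom
    have hlt : B.card < Fintype.card C := by omega
    have hne : (Bᶜ : Finset C).Nonempty := by
      rw [← Finset.card_pos, Finset.card_compl]; omega
    obtain ⟨d, hd, hdmax⟩ := Finset.exists_max_image Bᶜ f hne
    have hdB : d ∉ B := Finset.mem_compl.mp hd
    have hdom' : ∀ b ∈ insert d B, ∀ e ∉ insert d B, f e ≤ f b := by
      intro b hb e he
      have heB : e ∉ B := fun h => he (Finset.mem_insert_of_mem h)
      rcases Finset.mem_insert.mp hb with rfl | hbB
      · exact hdmax e (Finset.mem_compl.mpr heB)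
      · exact hdom b hbB e heB
    have hcard : (insert d B).card = B.card + 1 := Finset.card_insert_of_notMem hdB
    obtain ⟨W, hsub, hWcard, hWdom⟩ := ih (insert d B) (by omega) hdom'
    exact ⟨W, (Finset.subset_insert d B).trans hsub, by omega, hWdom⟩

/-- Under AV, if applying a set `A` of approval additions (each adding a candidate
to a vote not already approving it) makes `p` a member of some AV-winning committee of size `k`,
then applying only the additions of `A` that add approvals for `p` also does. -/
theorem stmt_1 {C : Type*} [Fintype C] [DecidableEq C] {n : ℕ} (V : Fin n → Finset C)
    (p : C) (k : ℕ) (hk1 : 1 ≤ k) (hk2 : k ≤ Fintype.card C)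
    (A : Finset (Fin n × C)) (hA : ∀ a ∈ A, a.2 ∉ V a.1)
    (h : ∃ W : Finset C, p ∈ W ∧ AVWinning (applyAdds V A) k W) :
    ∃ W : Finset C, p ∈ W ∧ AVWinning (applyAdds V (A.filter (fun a => a.2 = p))) k W := by
  obtain ⟨W, hpW, hWcard, hWdom⟩ := h
  set A' := A.filter (fun a => a.2 = p) with hA'
  set f := avScore (applyAdds V A') with hf
  set g := avScore (applyAdds V A) with hg
  -- p's score is unchanged
  have hp_eq : f p = g p := by
    unfold f g
    unfold avScore
    congr 1
    apply Finset.filter_congr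
    intro i _
    simp only [applyAdds, Finset.mem_union, Finset.mem_image, Finset.mem_filter, hA']
    constructor
    · rintro (h | ⟨a, ⟨⟨ha, _⟩, ha1⟩, ha2⟩)
      · exact Or.inl h
      · exact Or.inr ⟨a, ⟨ha, ha1⟩, ha2⟩
    · rintro (h | ⟨a, ⟨ha, ha1⟩, ha2⟩)
      · exact Or.inl h
      · exact Or.inr ⟨a, ⟨⟨ha, by simp [ha2]⟩, ha1⟩, ha2⟩
  -- every score can only decrease
  have hle : ∀ c, f c ≤ g c := by
    intro c
    unfold f g
    unfold avScore
    apply Finset.card_le_card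
    apply Finset.monotone_filter_right
    intro i _ hi
    simp only [applyAdds, Finset.mem_union, Finset.mem_image, Finset.mem_filter, hA'] at hi ⊢
    rcases hi with h | ⟨a, ⟨⟨ha, _⟩, ha1⟩, ha2⟩
    · exact Or.inl h
    · exact Or.inr ⟨a, ⟨ha, ha1⟩, ha2⟩
  -- the set of candidates strictly beating p
  set S := Finset.univ.filter (fun d => f p < f d) with hS
  have hSsub : S ⊆ W \ {p} := by
    intro d hd
    simp only [hS, Finset.mem_filter] at hd
    have hlt : f p < f d := hd.2
    have hne : d ≠ p := by rintro rfl; exact lt_irrefl _ hlt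
    have hdW : d ∈ W := by
      by_contra hdW
      have := hWdom p hpW d hdW
      have : g d ≤ g p := this
      have h1 : f d ≤ g d := hle d
      omega
    exact Finset.mem_sdiff.mpr ⟨hdW, by simp [hne]⟩
  have hpS : p ∉ S := by simp [hS]
  set B := insert p S with hB
  have hBcard : B.card ≤ k := by
    have h1 : B.card = S.card + 1 := Finset.card_insert_of_notMem hpS
    have h2 : S.card ≤ (W \ {p}).card := Finset.card_le_card hSsub
    have h3 : (W \ {p}).card = W.card - 1 := by
      rw [Finset.card_sdiff_of_subset (by simpa using hpW)]; simp
    have h4 : 1 ≤ W.card := Finset.card_pos.mpr ⟨p, hpW⟩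
    omega
  have hBdom : ∀ b ∈ B, ∀ d ∉ B, f d ≤ f b := by
    intro b hb d hd
    have hdS : d ∉ S := fun h => hd (Finset.mem_insert_of_mem h)
    have hdp : f d ≤ f p := by
      by_contra hlt
      exact hdS (by simp [hS]; omega)
    rcases Finset.mem_insert.mp hb with rfl | hbS
    · exact hdp
    · simp only [hS, Finset.mem_filter] at hbS
      omega
  obtain ⟨W', hsub, hW'card, hW'dom⟩ :=
    extend_committee f (k - B.card) B (by omega) hBdom
  refine ⟨W', hsub (Finset.mem_insert_self p S), ?_, hW'dom⟩
  omega
end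

section
/- Optimal priced AV bribery by adding approvals for the preferred candidate: let (C,V) be an approval election with n voters, p ∈ C, 1 ≤ k ≤ |C| − 1, and suppose each vote v with p ∉ v carries a nonnegative price π(v) for adding an approval for p to v. Let s_k be the k-th largest value in the multiset {AV-score(c) : c ∈ C \ {p}} and let t = max(0, s_k − AV-score(p)). Then t ≤ |{v ∈ V : p ∉ v}|, and the minimum total price of a set of approval additions for p after which p belongs to some AV-winning committee of size k equals the sum of the t smallest prices π(v) over votes v not approving p. -/
/-- Add an approval for `p` exactly in the votes of `A`. -/
def addForP {C : Type*} [DecidableEq C] {n : ℕ} (V : Fin n → Finset C) (p : C)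
    (A : Finset (Fin n)) : Fin n → Finset C :=
  fun i => if i ∈ A then insert p (V i) else V i

private lemma sum_take_le_of_sublist_sorted :
    ∀ {l₂ l₁ : List ℝ}, l₁.Sublist l₂ → l₂.Pairwise (· ≤ ·) →
      ∀ {t : ℕ}, t ≤ l₁.length → (l₂.take t).sum ≤ (l₁.take t).sum := by
  intro l₂
  induction l₂ with
  | nil =>
    intro l₁ h _ t ht
    simp [List.sublist_nil.mp h]
  | cons a l₂' ih =>
    intro l₁ h hs t ht
    cases h with
    | cons _ h' =>
      cases t with
      | zero => simp
      | succ s =>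
        obtain ⟨b, l₁', rfl⟩ :=
          List.exists_cons_of_ne_nil (List.ne_nil_of_length_pos (l := l₁) (by omega))
        have hb : a ≤ b := (List.pairwise_cons.mp hs).1 b (h'.subset (List.mem_cons_self (a := b) (l := l₁')))
        have h₂ : (l₂'.take s).sum ≤ (l₁'.take s).sum :=
          ih ((List.sublist_cons_self b l₁').trans h') (List.pairwise_cons.mp hs).2
            (by simp at ht; omega)
        simpa using add_le_add hb h₂
    | cons_cons _ h' =>
      rename_i l₁'
      cases t with
      | zero => simp
      | succ s =>
        have h₂ : (l₂'.take s).sum ≤ (l₁'.take s).sum :=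
          ih h' (List.pairwise_cons.mp hs).2 (by simp at ht; omega)
        simpa using add_le_add (le_refl a) h₂

private lemma key_iff {C : Type*} [Fintype C] [DecidableEq C] (p : C) (k : ℕ)
    (hk1 : 1 ≤ k) (hk2 : k ≤ Fintype.card C - 1) (f : C → ℕ) :
    (∃ W : Finset C, p ∈ W ∧ W.card = k ∧ ∀ c ∈ W, ∀ d ∉ W, f d ≤ f c) ↔
      (((Finset.univ.erase p).val.map f).sort (· ≤ ·)).getD (Fintype.card C - 1 - k) 0
        ≤ f p := by
  classical
  set m := Fintype.card C - 1 with hm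
  set E := (Finset.univ : Finset C).erase p with hE
  set s := E.val.map f with hs
  set l := s.sort (· ≤ ·) with hl
  have hls : l.Pairwise (· ≤ ·) := Multiset.pairwise_sort _ _
  have hcoe : (↑l : Multiset ℕ) = s := Multiset.sort_eq _ _
  have hlen : l.length = m := by
    rw [hl, Multiset.length_sort, hs, Multiset.card_map]
    show E.card = m
    rw [hE, Finset.card_erase_of_mem (Finset.mem_univ p), Finset.card_univ]
  have hmk : m - k < l.length := by omega
  have hskd : l.getD (m - k) 0 = l[m - k] := List.getD_eq_getElem l 0 hmk
  set sk := l[m - k]'hmk with hsk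
  rw [hskd]
  have mono : ∀ i j (hi : i < l.length) (hj : j < l.length), i ≤ j → l[i] ≤ l[j] := by
    intro i j hi hj hij
    rcases eq_or_lt_of_le hij with rfl | hlt
    · exact le_rfl
    · exact (List.pairwise_iff_getElem.mp hls) i j hi hj hlt
  have Hdrop : ∀ y ∈ l.drop (m - k), sk ≤ y := by
    intro y hy
    rw [List.mem_iff_getElem] at hy
    obtain ⟨j, hj, rfl⟩ := hy
    rw [List.getElem_drop]
    exact mono (m - k) (m - k + j) hmk (by rw [List.length_drop] at hj; omega)
      (Nat.le_add_right _ _)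
  have Htake : ∀ y ∈ l.take (m - k + 1), y ≤ sk := by
    intro y hy
    rw [List.mem_iff_getElem] at hy
    obtain ⟨j, hj, rfl⟩ := hy
    rw [List.getElem_take]
    exact mono j (m - k) (by simp at hj; omega) hmk (by simp at hj; omega)
  have hcount : ∀ (q : ℕ → Prop) [DecidablePred q],
      l.countP (fun b => decide (q b)) = (E.filter (fun c => q (f c))).card := by
    intro q hq
    have h1 : l.countP (fun b => decide (q b)) = Multiset.countP q s := by
      rw [← hcoe, Multiset.coe_countP]
    rw [h1, hs, Multiset.countP_map]
    rfl
  constructor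
  · rintro ⟨W, hpW, hcard, hwin⟩
    by_contra hcon
    push_neg at hcon
    have hsubW : E.filter (fun c => f p < f c) ⊆ W.erase p := by
      intro c hc
      rw [Finset.mem_filter] at hc
      have hcp : c ≠ p := (Finset.mem_erase.mp hc.1).1
      have hcW : c ∈ W := by
        by_contra hcW
        exact absurd (hwin p hpW c hcW) (not_le.mpr hc.2)
      exact Finset.mem_erase.mpr ⟨hcp, hcW⟩
    have hcardle : (E.filter (fun c => f p < f c)).card ≤ k - 1 := by
      calc (E.filter (fun c => f p < f c)).card ≤ (W.erase p).card :=
            Finset.card_le_card hsubW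
        _ = k - 1 := by rw [Finset.card_erase_of_mem hpW, hcard]
    have hge : k ≤ (E.filter (fun c => f p < f c)).card := by
      rw [← hcount]
      calc k = (l.drop (m - k)).length := by rw [List.length_drop, hlen]; omega
        _ = (l.drop (m - k)).countP (fun b => decide (f p < b)) := by
            rw [List.countP_eq_length.mpr]
            intro a ha
            simpa using lt_of_lt_of_le hcon (Hdrop a ha)
        _ ≤ l.countP (fun b => decide (f p < b)) :=
            (List.drop_sublist _ _).countP_le
    omega
  · intro hsp
    have L1 : (E.filter (fun c => sk < f c)).card ≤ k - 1 := by
      rw [← hcount]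
      have := List.take_append_drop (m - k + 1) l
      calc l.countP (fun b => decide (sk < b))
          = (l.take (m - k + 1)).countP (fun b => decide (sk < b))
            + (l.drop (m - k + 1)).countP (fun b => decide (sk < b)) := by
            conv_lhs => rw [← this]
            rw [List.countP_append]
        _ ≤ 0 + (l.drop (m - k + 1)).length := by
            gcongr
            · rw [Nat.le_zero, List.countP_eq_zero]
              intro a ha
              simpa using Htake a ha
            · exact List.countP_le_length
        _ ≤ k - 1 := by rw [List.length_drop, hlen]; omega
    have L2 : k ≤ (E.filter (fun c => sk ≤ f c)).card := by
      rw [← hcount]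
      calc k = (l.drop (m - k)).length := by rw [List.length_drop, hlen]; omega
        _ = (l.drop (m - k)).countP (fun b => decide (sk ≤ b)) := by
            rw [List.countP_eq_length.mpr]
            intro a ha
            simpa using Hdrop a ha
        _ ≤ l.countP (fun b => decide (sk ≤ b)) :=
            (List.drop_sublist _ _).countP_le
    have hHG : E.filter (fun c => sk < f c) ⊆ E.filter (fun c => sk ≤ f c) := by
      intro c hc
      rw [Finset.mem_filter] at hc ⊢
      exact ⟨hc.1, le_of_lt hc.2⟩
    obtain ⟨W', hHW', hW'G, hcardW'⟩ :=
      Finset.exists_subsuperset_card_eq (n := k - 1) hHG L1 ((by omega : k - 1 ≤ k).trans L2)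
    have hpW' : p ∉ W' := by
      intro hp
      have := Finset.mem_filter.mp (hW'G hp)
      exact (Finset.mem_erase.mp this.1).1 rfl
    refine ⟨insert p W', Finset.mem_insert_self _ _, ?_, ?_⟩
    · rw [Finset.card_insert_of_notMem hpW', hcardW']; omega
    · intro c hc d hd
      have hdp : d ≠ p := fun h => hd (h ▸ Finset.mem_insert_self p W')
      have hdW' : d ∉ W' := fun h => hd (Finset.mem_insert_of_mem h)
      have hdE : d ∈ E := Finset.mem_erase.mpr ⟨hdp, Finset.mem_univ d⟩
      have hdsk : f d ≤ sk := by
        by_contra hcon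
        exact hdW' (hHW' (Finset.mem_filter.mpr ⟨hdE, not_le.mp hcon⟩))
      rcases Finset.mem_insert.mp hc with rfl | hcW'
      · exact le_trans hdsk hsp
      · exact le_trans hdsk (Finset.mem_filter.mp (hW'G hcW')).2

private lemma avScore_addForP_ne {C : Type*} [DecidableEq C] {n : ℕ} (V : Fin n → Finset C)
    (p : C) (A : Finset (Fin n)) {c : C} (hc : c ≠ p) :
    avScore (addForP V p A) c = avScore V c := by
  unfold avScore addForP
  congr 1
  apply Finset.filter_congr
  intro i _
  split <;> simp [Finset.mem_insert, hc]

private lemma avScore_addForP_self {C : Type*} [DecidableEq C] {n : ℕ} (V : Fin n → Finset C)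
    (p : C) (A : Finset (Fin n)) (hA : ∀ i ∈ A, p ∉ V i) :
    avScore (addForP V p A) p = avScore V p + A.card := by
  unfold avScore addForP
  have h1 : (Finset.univ.filter (fun i => p ∈ if i ∈ A then insert p (V i) else V i))
      = Finset.univ.filter (fun i => p ∈ V i ∨ i ∈ A) := by
    apply Finset.filter_congr
    intro i _
    split <;> simp_all
  rw [h1, Finset.filter_or]
  have h2 : Finset.univ.filter (fun i => i ∈ A) = A := by
    ext i; simp
  rw [h2, Finset.card_union_of_disjoint]
  rw [Finset.disjoint_left]
  intro i hi
  exact fun hiA => hA i hiA (Finset.mem_filter.mp hi).2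

/-- For priced AV bribery by adding approvals for the preferred candidate `p`
(price `π i` for adding `p` to vote `i`, each vote carrying a nonnegative price), with
`1 ≤ k ≤ |C| - 1`: letting `sk` be the k-th largest AV score among the candidates other than `p`
and `t = max(0, sk - score(p))` (truncated subtraction), we have `t` is at most the number of
votes not approving `p`, and the minimum total price of a set of approval additions for `p`
after which `p` belongs to some AV-winning size-`k` committee equals the sum of the `t`
smallest prices among votes not approving `p`. -/
theorem stmt_2 {C : Type*} [Fintype C] [DecidableEq C] {n : ℕ} (V : Fin n → Finset C)
    (p : C) (k : ℕ) (hk1 : 1 ≤ k) (hk2 : k ≤ Fintype.card C - 1)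
    (π : Fin n → ℝ) (hπ : ∀ i, 0 ≤ π i) :
    let sk : ℕ := (((Finset.univ.erase p).val.map (avScore V)).sort (· ≤ ·)).getD
      (Fintype.card C - 1 - k) 0
    let t : ℕ := sk - avScore V p
    t ≤ (Finset.univ.filter (fun i => p ∉ V i)).card ∧
      IsLeast
        {x : ℝ | ∃ A : Finset (Fin n), (∀ i ∈ A, p ∉ V i) ∧
          (∃ W : Finset C, p ∈ W ∧ AVWinning (addForP V p A) k W) ∧ x = ∑ i ∈ A, π i}
        (((((Finset.univ.filter (fun i => p ∉ V i)).val.map π).sort (· ≤ ·)).take t).sum) := by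
  classical
  intro sk t
  set m := Fintype.card C - 1 with hm
  set E := (Finset.univ : Finset C).erase p with hE
  set S := (Finset.univ.filter (fun i => p ∉ V i)) with hS
  set l := (E.val.map (avScore V)).sort (· ≤ ·) with hl
  have hlen : l.length = m := by
    rw [hl, Multiset.length_sort, Multiset.card_map]
    show E.card = m
    rw [hE, Finset.card_erase_of_mem (Finset.mem_univ p), Finset.card_univ]
  have hmk : m - k < l.length := by omega
  have hsk : sk = l[m - k] := List.getD_eq_getElem l 0 hmk
  -- sk ≤ n
  have hskn : sk ≤ n := by
    have hmem : sk ∈ l := hsk ▸ List.getElem_mem hmk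
    have : sk ∈ E.val.map (avScore V) := by
      rw [← Multiset.sort_eq (E.val.map (avScore V)) (· ≤ ·)]
      exact_mod_cast hmem
    obtain ⟨c, _, hcc⟩ := Multiset.mem_map.mp this
    rw [← hcc]
    calc avScore V c ≤ (Finset.univ : Finset (Fin n)).card := Finset.card_filter_le _ _
      _ = n := by simp
  have hcards : avScore V p + S.card = n := by
    have := Finset.card_filter_add_card_filter_not
      (s := (Finset.univ : Finset (Fin n))) (fun i => p ∈ V i)
    simpa [avScore, hS] using this
  have htS : t ≤ S.card := by
    have : t = sk - avScore V p := rfl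
    omega
  -- the equivalence
  have equiv : ∀ A : Finset (Fin n), (∀ i ∈ A, p ∉ V i) →
      ((∃ W, p ∈ W ∧ AVWinning (addForP V p A) k W) ↔ sk ≤ avScore V p + A.card) := by
    intro A hA
    have hmap : E.val.map (avScore (addForP V p A)) = E.val.map (avScore V) := by
      apply Multiset.map_congr rfl
      intro c hc
      exact avScore_addForP_ne V p A (Finset.mem_erase.mp hc).1
    have := key_iff p k hk1 hk2 (avScore (addForP V p A))
    rw [show ((Finset.univ.erase p).val.map (avScore (addForP V p A)))
          = E.val.map (avScore V) from hmap] at this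
    rw [avScore_addForP_self V p A hA] at this
    simp only [AVWinning]
    exact this
  refine ⟨htS, ?_, ?_⟩
  · -- membership
    set q := (S.val.map π).sort (· ≤ ·) with hq
    set is := S.toList.mergeSort (fun a b => decide (π a ≤ π b)) with his
    have hperm : is.Perm S.toList := List.mergeSort_perm _ _
    have hnodup : is.Nodup := hperm.nodup_iff.mpr S.nodup_toList
    have hlenis : is.length = S.card := hperm.length_eq.trans (Finset.length_toList S)
    have hsorted : (is.map π).Pairwise (· ≤ ·) := by
      have := List.pairwise_mergeSort (le := fun a b => decide (π a ≤ π b))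
        (fun a b c h₁ h₂ => by simp at h₁ h₂ ⊢; exact le_trans h₁ h₂)
        (fun a b => by simpa using le_total (π a) (π b)) S.toList
      rw [← his] at this
      rw [List.pairwise_map]
      exact this.imp (fun h => by simpa using h)
    have heq : is.map π = q := by
      apply List.Perm.eq_of_pairwise' hsorted (Multiset.pairwise_sort _ _)
      apply Multiset.coe_eq_coe.mp
      rw [Multiset.sort_eq]
      have : (↑(is.map π) : Multiset ℝ) = Multiset.map π ↑is := by simp
      rw [this]
      congr 1
      rw [← Finset.coe_toList S]
      exact Multiset.coe_eq_coe.mpr hperm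
    set A := (is.take t).toFinset with hA
    have hnodupt : (is.take t).Nodup := (List.take_sublist t is).nodup hnodup
    have hAcard : A.card = t := by
      rw [hA, List.toFinset_card_of_nodup hnodupt, List.length_take]
      omega
    have hAsub : ∀ i ∈ A, p ∉ V i := by
      intro i hi
      have : i ∈ S.toList := hperm.subset ((List.take_sublist t is).subset
        (List.mem_toFinset.mp hi))
      rw [Finset.mem_toList, hS, Finset.mem_filter] at this
      exact this.2
    have hsum : ∑ i ∈ A, π i = (q.take t).sum := by
      rw [hA, List.sum_toFinset π hnodupt, List.map_take, heq]
    refine ⟨A, hAsub, ?_, hsum.symm⟩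
    rw [equiv A hAsub, hAcard]
    have : t = sk - avScore V p := rfl
    omega
  · -- lower bound
    rintro x ⟨A, hA, hW, rfl⟩
    have hAS : A ⊆ S := fun i hi => Finset.mem_filter.mpr ⟨Finset.mem_univ _, hA i hi⟩
    have htA : t ≤ A.card := by
      have h1 := (equiv A hA).mp hW
      have : t = sk - avScore V p := rfl
      omega
    set q := (S.val.map π).sort (· ≤ ·) with hq
    set qA := (A.val.map π).sort (· ≤ ·) with hqA
    have hsub : qA.Sublist q := by
      apply List.sublist_of_subperm_of_pairwise _ (Multiset.pairwise_sort _ _)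
        (Multiset.pairwise_sort _ _)
      apply Multiset.coe_le.mp
      rw [Multiset.sort_eq, Multiset.sort_eq]
      exact Multiset.map_le_map (Finset.val_le_iff.mpr hAS)
    have hlenqA : qA.length = A.card := by
      rw [hqA, Multiset.length_sort, Multiset.card_map]; rfl
    have h1 : (q.take t).sum ≤ (qA.take t).sum :=
      sum_take_le_of_sublist_sorted hsub (Multiset.pairwise_sort _ _) (by omega)
    have h2 : (qA.take t).sum ≤ qA.sum := by
      conv_rhs => rw [← List.take_append_drop t qA]
      rw [List.sum_append]
      have : 0 ≤ (qA.drop t).sum := by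
        apply List.sum_nonneg
        intro y hy
        have : y ∈ qA := (List.drop_sublist t qA).subset hy
        have : y ∈ A.val.map π := by
          rw [← Multiset.sort_eq (A.val.map π) (· ≤ ·)]
          exact_mod_cast this
        obtain ⟨i, _, rfl⟩ := Multiset.mem_map.mp this
        exact hπ i
      linarith
    have h3 : qA.sum = ∑ i ∈ A, π i := by
      have : (↑qA : Multiset ℝ) = A.val.map π := Multiset.sort_eq _ _
      calc qA.sum = (↑qA : Multiset ℝ).sum := rfl
        _ = (A.val.map π).sum := by rw [this]
        _ = ∑ i ∈ A, π i := rfl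
    linarith
end

section
/- Optimal priced AV bribery by deleting approvals: let (C,V) be an approval election, p ∈ C, 1 ≤ k ≤ |C|, and suppose each pair (v,c) with c ∈ v carries a nonnegative price for deleting the approval of c from v. Let C' = {c ∈ C \ {p} : AV-score(c) > AV-score(p)}. If |C'| ≤ k − 1, then p already belongs to some AV-winning committee of size k and the minimum bribery cost is 0. Otherwise, for each c ∈ C' define down(c) as the sum of the (AV-score(c) − AV-score(p)) smallest deletion prices among the votes approving c; then the minimum total price of a set of approval deletions after which p belongs to some AV-winning committee of size k equals the sum of the |C'| − (k − 1) smallest values down(c) over c ∈ C'. -/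
lemma take_sum_mono : ∀ {l l' : List ℝ}, List.Sublist l' l → l.Pairwise (· ≤ ·) →
    ∀ t, t ≤ l'.length → (l.take t).sum ≤ (l'.take t).sum := by
  intro l l' h
  induction h with
  | slnil => intro _ t ht; simp_all
  | @cons l₁ l₂ a h ih =>
      intro hs t ht
      match t with
      | 0 => simp
      | (t+1) =>
        have h1 : t + 1 ≤ l₂.length := ht.trans h.length_le
        have hgl : t < l₂.length := h1
        calc ((a :: l₂).take (t+1)).sum = a + (l₂.take t).sum := by simp
          _ ≤ l₂[t] + (l₂.take t).sum := by
              have := (List.pairwise_cons.1 hs).1 l₂[t] (l₂.getElem_mem hgl)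
              linarith
          _ = (l₂.take (t+1)).sum := by rw [List.sum_take_succ _ _ hgl]; ring
          _ ≤ (l₁.take (t+1)).sum := ih hs.of_cons (t+1) ht
  | @cons_cons l₁ l₂ a h ih =>
      intro hs t ht
      match t with
      | 0 => simp
      | (t+1) =>
        simp only [List.take_succ_cons, List.sum_cons]
        have := ih hs.of_cons t (Nat.succ_le_succ_iff.1 ht)
        linarith

lemma take_sum_nonneg {l : List ℝ} (hl : ∀ x ∈ l, 0 ≤ x) (t : ℕ) : 0 ≤ (l.take t).sum :=
  List.sum_nonneg fun x hx => hl x (List.mem_of_mem_take hx)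

lemma sort_sublist_of_le {s m : Multiset ℝ} (h : s ≤ m) :
    List.Sublist (s.sort (· ≤ ·)) (m.sort (· ≤ ·)) := by
  apply List.sublist_of_subperm_of_pairwise _ (Multiset.pairwise_sort _ _) (Multiset.pairwise_sort _ _)
  rw [← Multiset.coe_le, Multiset.sort_eq, Multiset.sort_eq]
  exact h

lemma mintake_le_sum {α : Type*} [DecidableEq α] (A I : Finset α) (f : α → ℝ)
    (hf : ∀ a ∈ A, 0 ≤ f a) (hI : I ⊆ A) (t : ℕ) (ht : t ≤ I.card) :
    (((A.val.map f).sort (· ≤ ·)).take t).sum ≤ ∑ i ∈ I, f i := by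
  have hle : I.val.map f ≤ A.val.map f := Multiset.map_le_map (Finset.val_le_iff.2 hI)
  have hsub := sort_sublist_of_le hle
  have h1 : (((A.val.map f).sort (· ≤ ·)).take t).sum ≤
      (((I.val.map f).sort (· ≤ ·)).take t).sum := by
    apply take_sum_mono hsub (Multiset.pairwise_sort _ _)
    simpa using ht
  refine h1.trans ?_
  have h2 : (((I.val.map f).sort (· ≤ ·)).take t).sum ≤ ((I.val.map f).sort (· ≤ ·)).sum := by
    have := List.take_append_drop t ((I.val.map f).sort (· ≤ ·))
    have h3 : 0 ≤ (((I.val.map f).sort (· ≤ ·)).drop t).sum := by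
      apply List.sum_nonneg
      intro x hx
      have hx' : x ∈ I.val.map f := by
        rw [← Multiset.mem_sort (· ≤ ·)]
        exact List.mem_of_mem_drop hx
      obtain ⟨i, hi, rfl⟩ := Multiset.mem_map.1 hx'
      exact hf i (hI hi)
    calc (((I.val.map f).sort (· ≤ ·)).take t).sum
        ≤ (((I.val.map f).sort (· ≤ ·)).take t).sum
          + (((I.val.map f).sort (· ≤ ·)).drop t).sum := by linarith
      _ = ((I.val.map f).sort (· ≤ ·)).sum := by rw [← List.sum_append, this]
  refine h2.trans_eq ?_
  calc ((I.val.map f).sort (· ≤ ·)).sum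
      = ((((I.val.map f).sort (· ≤ ·)) : Multiset ℝ)).sum := (Multiset.sum_coe _).symm
    _ = (I.val.map f).sum := by rw [Multiset.sort_eq]
    _ = ∑ i ∈ I, f i := rfl

lemma mintake_nonneg {α : Type*} (A : Finset α) (f : α → ℝ) (hf : ∀ a ∈ A, 0 ≤ f a) (t : ℕ) :
    0 ≤ (((A.val.map f).sort (· ≤ ·)).take t).sum := by
  apply take_sum_nonneg
  intro x hx
  rw [Multiset.mem_sort] at hx
  obtain ⟨i, hi, rfl⟩ := Multiset.mem_map.1 hx
  exact hf i hi

lemma exists_subset_sum_take {α : Type*} [DecidableEq α] (A : Finset α) (f : α → ℝ) (t : ℕ)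
    (ht : t ≤ A.card) :
    ∃ I, I ⊆ A ∧ I.card = t ∧ ∑ i ∈ I, f i = (((A.val.map f).sort (· ≤ ·)).take t).sum := by
  set L := (A.val.map f).sort (· ≤ ·) with hL
  have hLlen : L.length = A.card := by
    rw [hL]
    rw [Multiset.length_sort]
    simp
  have hperm : L.Perm (A.toList.map f) := by
    rw [← Multiset.coe_eq_coe, Multiset.sort_eq, ← Multiset.map_coe, Finset.coe_toList]
  have hsp : List.Subperm (L.take t) (A.toList.map f) :=
    (List.take_sublist _ _).subperm.trans hperm.subperm
  obtain ⟨l'', hpl, hsl⟩ := hsp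
  obtain ⟨l₀, hl₀, rfl⟩ := List.sublist_map_iff.1 hsl
  have hnd : l₀.Nodup := A.nodup_toList.sublist hl₀
  refine ⟨⟨(l₀ : Multiset α), by exact_mod_cast hnd⟩, ?_, ?_, ?_⟩
  · intro a ha
    have : a ∈ l₀ := by simpa [Finset.mem_def] using ha
    exact (Finset.mem_toList).1 (hl₀.subset this)
  · have h1 : l₀.length = t := by
      have h2 := hpl.length_eq
      simp only [List.length_map, List.length_take] at h2
      omega
    simpa [Finset.card] using h1
  · have hsum : (l₀.map f).sum = (L.take t).sum := hpl.sum_eq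
    show (Multiset.map f (l₀ : Multiset α)).sum = _
    rw [Multiset.map_coe, Multiset.sum_coe, hsum]


lemma exists_winning {C : Type*} [Fintype C] [DecidableEq C] (f : C → ℕ)
    (p : C) (k : ℕ) (hk1 : 1 ≤ k) (hk2 : k ≤ Fintype.card C)
    (hb : (Finset.univ.filter (fun c => f p < f c)).card ≤ k - 1) :
    ∃ W : Finset C, p ∈ W ∧ W.card = k ∧ ∀ c ∈ W, ∀ d ∉ W, f d ≤ f c := by
  classical
  -- the set of size-k committees containing p
  have hne : (Finset.univ.filter (fun W : Finset C => p ∈ W ∧ W.card = k)).Nonempty := by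
    obtain ⟨W₀, h1, _, h3⟩ := Finset.exists_subsuperset_card_eq
      (Finset.subset_univ {p}) (by simpa using hk1) (by simpa using hk2)
    refine ⟨W₀, ?_⟩
    simp only [Finset.mem_filter, Finset.mem_univ, true_and]
    exact ⟨h1 (Finset.mem_singleton_self p), h3⟩
  obtain ⟨W, hW, hmax⟩ := Finset.exists_max_image _ (fun W => ∑ c ∈ W, f c) hne
  simp only [Finset.mem_filter, Finset.mem_univ, true_and] at hW
  obtain ⟨hpW, hcard⟩ := hW
  -- swap lemma
  have swap : ∀ c ∈ W, c ≠ p → ∀ d ∉ W, ¬ (f c < f d) := by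
    intro c hc hcp d hd hlt
    have hpe : p ∈ W.erase c := Finset.mem_erase.2 ⟨hcp.symm, hpW⟩
    have hde : d ∉ W.erase c := fun h => hd (Finset.mem_of_mem_erase h)
    have hcard' : (insert d (W.erase c)).card = k := by
      rw [Finset.card_insert_of_notMem hde, Finset.card_erase_of_mem hc, hcard]
      omega
    have hmax' := hmax (insert d (W.erase c)) (by
      simp only [Finset.mem_filter, Finset.mem_univ, true_and]
      exact ⟨Finset.mem_insert_of_mem hpe, hcard'⟩)
    rw [Finset.sum_insert hde] at hmax'
    have he : ∑ x ∈ W.erase c, f x + f c = ∑ x ∈ W, f x := Finset.sum_erase_add _ _ hc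
    omega
  refine ⟨W, hpW, hcard, ?_⟩
  intro c hc d hd
  by_contra hlt
  push_neg at hlt
  rcases eq_or_ne c p with hcp | hcp
  · -- c = p : f p < f d
    rw [hcp] at hlt
    set B := Finset.univ.filter (fun c => f p < f c) with hB
    have hdB : d ∈ B := by simp [hB, hlt]
    have hWB : ¬ W ⊆ insert p B := by
      intro hsub
      have h1 : W ⊆ (insert p B).erase d := by
        intro x hx
        exact Finset.mem_erase.2 ⟨fun h => hd (h ▸ hx), hsub hx⟩
      have h2 := Finset.card_le_card h1
      have h3 : ((insert p B).erase d).card ≤ (insert p B).card - 1 :=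
        le_of_eq (Finset.card_erase_of_mem (Finset.mem_insert_of_mem hdB))
      have h4 : (insert p B).card ≤ B.card + 1 := Finset.card_insert_le _ _
      omega
    obtain ⟨e, heW, heB⟩ := Finset.not_subset.1 hWB
    have hep : e ≠ p := fun h => heB (h ▸ Finset.mem_insert_self p B)
    have hefp : ¬ f p < f e := by
      intro h
      exact heB (Finset.mem_insert_of_mem (by simp [hB, h]))
    exact swap e heW hep d hd (by omega)
  · exact swap c hc hcp d hd hlt

/-- Apply a set `D` of approval deletions (pairs (voter, candidate)) to the votes. -/
def applyDeletes {C : Type*} [DecidableEq C] {n : ℕ} (V : Fin n → Finset C)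
    (D : Finset (Fin n × C)) : Fin n → Finset C :=
  fun i => (V i).filter (fun c => (i, c) ∉ D)

section Main
variable {C : Type*} [Fintype C] [DecidableEq C] {n : ℕ}

lemma score_applyDeletes (V : Fin n → Finset C) (D : Finset (Fin n × C)) (c : C) :
    avScore (applyDeletes V D) c
      = (Finset.univ.filter (fun i => c ∈ V i ∧ (i, c) ∉ D)).card := by
  unfold avScore applyDeletes
  congr 1
  ext i
  simp [Finset.mem_filter]

lemma score_applyDeletes_le (V : Fin n → Finset C) (D : Finset (Fin n × C)) (c : C) :
    avScore (applyDeletes V D) c ≤ avScore V c := by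
  rw [score_applyDeletes]
  apply Finset.card_le_card
  intro i hi
  simp only [Finset.mem_filter] at hi ⊢
  exact ⟨hi.1, hi.2.1⟩

lemma score_drop_bound (V : Fin n → Finset C) (D : Finset (Fin n × C)) (c : C) :
    avScore V c ≤ avScore (applyDeletes V D) c + (D.filter (fun d => d.2 = c)).card := by
  rw [score_applyDeletes]
  have hsub2 : (Finset.univ.filter (fun i => c ∈ V i)) ⊆
      (Finset.univ.filter (fun i => c ∈ V i ∧ (i, c) ∉ D))
        ∪ (D.filter (fun d => d.2 = c)).image Prod.fst := by
    intro i hi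
    simp only [Finset.mem_filter, Finset.mem_univ, true_and] at hi
    by_cases hmem : (i, c) ∈ D
    · apply Finset.mem_union_right
      exact Finset.mem_image.2 ⟨(i, c), Finset.mem_filter.2 ⟨hmem, rfl⟩, rfl⟩
    · apply Finset.mem_union_left
      simp [hi, hmem]
  calc avScore V c ≤ ((Finset.univ.filter (fun i => c ∈ V i ∧ (i, c) ∉ D))
        ∪ (D.filter (fun d => d.2 = c)).image Prod.fst).card := Finset.card_le_card hsub2
    _ ≤ (Finset.univ.filter (fun i => c ∈ V i ∧ (i, c) ∉ D)).card
        + ((D.filter (fun d => d.2 = c)).image Prod.fst).card := Finset.card_union_le _ _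
    _ ≤ _ := by
        have := Finset.card_image_le (s := D.filter (fun d => d.2 = c)) (f := Prod.fst)
        omega

end Main

/-- Optimal priced AV bribery by deleting approvals.  With
`C' = {c ≠ p : score(c) > score(p)}`: if `|C'| ≤ k - 1` then `p` already belongs to some
AV-winning size-`k` committee and the minimum bribery cost is `0`; otherwise, with `down(c)`
the sum of the `score(c) - score(p)` smallest deletion prices among votes approving `c`, the
minimum total price of a set of deletions after which `p` belongs to some AV-winning size-`k`
committee equals the sum of the `|C'| - (k-1)` smallest values `down(c)` over `c ∈ C'`. -/
theorem stmt_3 {C : Type*} [Fintype C] [DecidableEq C] {n : ℕ} (V : Fin n → Finset C)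
    (p : C) (k : ℕ) (hk1 : 1 ≤ k) (hk2 : k ≤ Fintype.card C)
    (π : Fin n × C → ℝ) (hπ : ∀ d, 0 ≤ π d) :
    let Cbad : Finset C := Finset.univ.filter (fun c => c ≠ p ∧ avScore V p < avScore V c)
    let costSet : Set ℝ := {x | ∃ D : Finset (Fin n × C), (∀ d ∈ D, d.2 ∈ V d.1) ∧
      (∃ W : Finset C, p ∈ W ∧ AVWinning (applyDeletes V D) k W) ∧ x = ∑ d ∈ D, π d}
    let down : C → ℝ := fun c =>
      (((((Finset.univ.filter (fun i => c ∈ V i)).val.map (fun i => π (i, c))).sort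
        (· ≤ ·)).take (avScore V c - avScore V p)).sum)
    (Cbad.card ≤ k - 1 →
      (∃ W : Finset C, p ∈ W ∧ AVWinning V k W) ∧ IsLeast costSet 0) ∧
    (k - 1 < Cbad.card →
      IsLeast costSet ((((Cbad.val.map down).sort (· ≤ ·)).take (Cbad.card - (k - 1))).sum)) := by
  intro Cbad costSet down
  have hCbad : ∀ c, c ∈ Cbad ↔ c ≠ p ∧ avScore V p < avScore V c := by
    intro c
    simp only [Cbad, Finset.mem_filter, Finset.mem_univ, true_and]
  have hdown_nonneg : ∀ c, 0 ≤ down c := fun c => mintake_nonneg _ _ (fun a _ => hπ _) _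
  have hfilter_eq : ∀ (f : C → ℕ), f = avScore V →
      Finset.univ.filter (fun c => f p < f c)
        = Finset.univ.filter (fun c => c ≠ p ∧ f p < f c) := by
    rintro f rfl
    ext c
    simp only [Finset.mem_filter, Finset.mem_univ, true_and]
    constructor
    · intro h
      refine ⟨?_, h⟩
      rintro rfl
      exact lt_irrefl _ h
    · exact fun h => h.2
  constructor
  · -- Part 1
    intro hcard
    obtain ⟨W, h1, h2, h3⟩ := exists_winning (avScore V) p k hk1 hk2
      (by rw [hfilter_eq _ rfl]; exact hcard)
    have hVeq : applyDeletes V (∅ : Finset (Fin n × C)) = V := by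
      funext i
      simp [applyDeletes]
    refine ⟨⟨W, h1, h2, h3⟩, ?_, ?_⟩
    · exact ⟨∅, by simp, ⟨W, h1, by rw [hVeq]; exact ⟨h2, h3⟩⟩, by simp⟩
    · rintro x ⟨D, -, -, rfl⟩
      exact Finset.sum_nonneg fun d _ => hπ d
  · -- Part 2
    intro hlt
    set t := Cbad.card - (k - 1) with htdef
    have ht : t ≤ Cbad.card := Nat.sub_le _ _
    constructor
    · -- membership: construct an optimal bribery
      obtain ⟨S, hS, hScard, hSsum⟩ := exists_subset_sum_take Cbad down t ht
      have hIc : ∀ c ∈ S, ∃ I, I ⊆ Finset.univ.filter (fun i => c ∈ V i)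
          ∧ I.card = avScore V c - avScore V p
          ∧ ∑ i ∈ I, π (i, c) = down c := by
        intro c hc
        obtain ⟨I, h1, h2, h3⟩ := exists_subset_sum_take
          (Finset.univ.filter (fun i => c ∈ V i)) (fun i => π (i, c))
          (avScore V c - avScore V p) (Nat.sub_le _ _)
        exact ⟨I, h1, h2, h3⟩
      choose! I hI1 hI2 hI3 using hIc
      set D := S.biUnion (fun c => (I c).image (fun i => (i, c))) with hD
      have hmemD : ∀ i c, (i, c) ∈ D ↔ c ∈ S ∧ i ∈ I c := by
        intro i c
        simp only [hD, Finset.mem_biUnion, Finset.mem_image, Prod.mk.injEq]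
        constructor
        · rintro ⟨c', hc', j, hj, rfl, rfl⟩
          exact ⟨hc', hj⟩
        · rintro ⟨hc, hi⟩
          exact ⟨c, hc, i, hi, rfl, rfl⟩
      have hpS : p ∉ S := by
        intro h
        exact ((hCbad p).1 (hS h)).1 rfl
      have hsame : ∀ c ∉ S, avScore (applyDeletes V D) c = avScore V c := by
        intro c hc
        rw [score_applyDeletes]
        unfold avScore
        congr 1
        ext i
        simp only [Finset.mem_filter, Finset.mem_univ, true_and, and_iff_left_iff_imp]
        intro _ hmem
        exact hc ((hmemD i c).1 hmem).1
      have hdrop : ∀ c ∈ S, avScore (applyDeletes V D) c = avScore V p := by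
        intro c hc
        have hple : avScore V p < avScore V c := ((hCbad c).1 (hS hc)).2
        rw [score_applyDeletes]
        have heq : Finset.univ.filter (fun i => c ∈ V i ∧ (i, c) ∉ D)
            = (Finset.univ.filter (fun i => c ∈ V i)) \ I c := by
          ext i
          simp only [Finset.mem_filter, Finset.mem_univ, true_and, Finset.mem_sdiff, hmemD, hc,
            true_and]
        rw [heq, Finset.card_sdiff_of_subset (hI1 c hc), hI2 c hc]
        have : (Finset.univ.filter (fun i => c ∈ V i)).card = avScore V c := rfl
        omega
      have hsp' : avScore (applyDeletes V D) p = avScore V p := hsame p hpS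
      have hbad' : Finset.univ.filter
          (fun c => avScore (applyDeletes V D) p < avScore (applyDeletes V D) c)
          = Cbad \ S := by
        ext c
        simp only [Finset.mem_filter, Finset.mem_univ, true_and, Finset.mem_sdiff, hsp']
        by_cases hc : c ∈ S
        · simp [hdrop c hc, hc]
        · rw [hsame c hc]
          simp only [hc, not_false_iff, and_true, hCbad c]
          constructor
          · intro h
            refine ⟨?_, h⟩
            intro hcp
            rw [hcp] at h
            exact lt_irrefl _ h
          · exact fun h => h.2
      have hcard' : (Cbad \ S).card = k - 1 := by
        rw [Finset.card_sdiff_of_subset hS, hScard]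
        omega
      obtain ⟨W, h1, h2, h3⟩ := exists_winning (avScore (applyDeletes V D)) p k hk1 hk2
        (by rw [hbad', hcard'])
      refine ⟨D, ?_, ⟨W, h1, h2, h3⟩, ?_⟩
      · rintro ⟨i, c⟩ hd
        obtain ⟨hcS, hiI⟩ := (hmemD i c).1 hd
        have := hI1 c hcS hiI
        simpa using (Finset.mem_filter.1 this).2
      · -- sum equals the target
        have hdisj : ∀ c₁ ∈ S, ∀ c₂ ∈ S, c₁ ≠ c₂ →
            Disjoint ((I c₁).image (fun i => (i, c₁))) ((I c₂).image (fun i => (i, c₂))) := by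
          intro c₁ _ c₂ _ hne
          rw [Finset.disjoint_left]
          rintro ⟨i, c⟩ h1 h2
          obtain ⟨j1, -, he1⟩ := Finset.mem_image.1 h1
          obtain ⟨j2, -, he2⟩ := Finset.mem_image.1 h2
          cases he1; cases he2
          exact hne rfl
        rw [hD, Finset.sum_biUnion hdisj]
        rw [← hSsum]
        apply Finset.sum_congr rfl
        intro c hc
        rw [Finset.sum_image (by intro x _ y _ h; exact (Prod.mk.injEq .. ▸ h).1)]
        exact (hI3 c hc).symm
    · -- lower bound
      rintro x ⟨D, hDfeas, ⟨W, hpW, hWcard, hWwin⟩, rfl⟩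
      have hs'le : ∀ c, avScore (applyDeletes V D) c ≤ avScore V c :=
        score_applyDeletes_le V D
      have hBsub : Finset.univ.filter
          (fun c => avScore (applyDeletes V D) p < avScore (applyDeletes V D) c)
          ⊆ W.erase p := by
        intro c hc
        simp only [Finset.mem_filter, Finset.mem_univ, true_and] at hc
        have hcW : c ∈ W := by
          by_contra hcW
          exact absurd (hWwin p hpW c hcW) (not_le.2 hc)
        refine Finset.mem_erase.2 ⟨?_, hcW⟩
        intro hcp
        rw [hcp] at hc
        exact lt_irrefl _ hc
      have hBcard : (Finset.univ.filter
          (fun c => avScore (applyDeletes V D) p < avScore (applyDeletes V D) c)).card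
          ≤ k - 1 := by
        calc _ ≤ (W.erase p).card := Finset.card_le_card hBsub
          _ = k - 1 := by rw [Finset.card_erase_of_mem hpW, hWcard]
      set F := Cbad.filter
        (fun c => ¬ avScore (applyDeletes V D) p < avScore (applyDeletes V D) c) with hF
      have hFcard : t ≤ F.card := by
        have hsplit : (Cbad.filter
            (fun c => avScore (applyDeletes V D) p < avScore (applyDeletes V D) c)).card
            + F.card = Cbad.card := by
          rw [hF]
          exact Finset.card_filter_add_card_filter_not _
        have hsub3 : Cbad.filter
            (fun c => avScore (applyDeletes V D) p < avScore (applyDeletes V D) c)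
            ⊆ Finset.univ.filter
            (fun c => avScore (applyDeletes V D) p < avScore (applyDeletes V D) c) := by
          apply Finset.filter_subset_filter
          exact Finset.subset_univ _
        have := Finset.card_le_card hsub3
        omega
      have key : ∀ c ∈ F, down c ≤ ∑ d ∈ D.filter (fun d => d.2 = c), π d := by
        intro c hcF
        rw [hF, Finset.mem_filter] at hcF
        obtain ⟨hcC, hcnl⟩ := hcF
        have hple : avScore V p < avScore V c := ((hCbad c).1 hcC).2
        have h1 : avScore (applyDeletes V D) c ≤ avScore V p :=
          le_trans (not_lt.1 hcnl) (hs'le p)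
        have h2 := score_drop_bound V D c
        set Dc := D.filter (fun d => d.2 = c) with hDc
        set Ic := Dc.image Prod.fst with hIc
        have hsnd : ∀ d ∈ Dc, d.2 = c := fun d hd => (Finset.mem_filter.1 hd).2
        have hinj : Set.InjOn Prod.fst (Dc : Set (Fin n × C)) := by
          intro d1 h1' d2 h2' h
          have e1 := hsnd d1 (Finset.mem_coe.1 h1')
          have e2 := hsnd d2 (Finset.mem_coe.1 h2')
          exact Prod.ext h (e1.trans e2.symm)
        have hIcard : Ic.card = Dc.card := Finset.card_image_of_injOn hinj
        have hIsub : Ic ⊆ Finset.univ.filter (fun i => c ∈ V i) := by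
          intro i hi
          obtain ⟨d, hd, rfl⟩ := Finset.mem_image.1 hi
          have hdD : d ∈ D := Finset.mem_filter.1 hd |>.1
          have := hDfeas d hdD
          rw [hsnd d hd] at this
          simp [this]
        have ht' : avScore V c - avScore V p ≤ Ic.card := by omega
        have hmt := mintake_le_sum (Finset.univ.filter (fun i => c ∈ V i)) Ic
          (fun i => π (i, c)) (fun a _ => hπ _) hIsub _ ht'
        have hsum_eq : ∑ i ∈ Ic, π (i, c) = ∑ d ∈ Dc, π d := by
          rw [hIc, Finset.sum_image (fun x hx y hy h => hinj (Finset.mem_coe.2 hx) (Finset.mem_coe.2 hy) h)]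
          apply Finset.sum_congr rfl
          intro d hd
          have := hsnd d hd
          rw [show ((d.1 : Fin n), c) = d from Prod.ext rfl this.symm]
        exact le_trans hmt (le_of_eq hsum_eq)
      have hTle : (((Cbad.val.map down).sort (· ≤ ·)).take t).sum ≤ ∑ c ∈ F, down c :=
        mintake_le_sum Cbad F down (fun c _ => hdown_nonneg c) (Finset.filter_subset _ _) t hFcard
      have hmid : ∑ c ∈ F, down c ≤ ∑ c ∈ F, ∑ d ∈ D.filter (fun d => d.2 = c), π d :=
        Finset.sum_le_sum key
      have hdisj2 : ∀ c₁ ∈ F, ∀ c₂ ∈ F, c₁ ≠ c₂ →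
          Disjoint (D.filter (fun d => d.2 = c₁)) (D.filter (fun d => d.2 = c₂)) := by
        intro c₁ _ c₂ _ hne
        rw [Finset.disjoint_left]
        intro d h1 h2
        exact hne (((Finset.mem_filter.1 h1).2).symm.trans ((Finset.mem_filter.1 h2).2))
      have hfin : ∑ c ∈ F, ∑ d ∈ D.filter (fun d => d.2 = c), π d ≤ ∑ d ∈ D, π d := by
        rw [← Finset.sum_biUnion hdisj2]
        apply Finset.sum_le_sum_of_subset_of_nonneg
        · intro d hd
          obtain ⟨c, -, hdc⟩ := Finset.mem_biUnion.1 hd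
          exact (Finset.mem_filter.1 hdc).1
        · exact fun d _ _ => hπ d
      calc (((Cbad.val.map down).sort (· ≤ ·)).take t).sum ≤ ∑ c ∈ F, down c := hTle
        _ ≤ _ := hmid
        _ ≤ ∑ d ∈ D, π d := hfin
end

section
/- Forward direction of the reduction from Independent Set to AV swap bribery: let G be a cubic graph (every vertex has degree exactly 3) with vertex set U, |U| = n, and let h be a positive integer with h ≤ n. Build the approval election with candidate set C = {p} ∪ {c_u : u ∈ U}, one edge voter v_e = {c_u, c_w} for each edge e = {u,w} of G, and 3h additional voters each approving all of {c_u : u ∈ U}. If G has an independent set of size h, then there exists a set of 3h approval swaps, each moving an approval from a vertex candidate to p within a distinct edge voter, after which p belongs to some AV-winning committee of size n − h + 1. -/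
def edgeVote {U : Type*} [Fintype U] [DecidableEq U] (e : Sym2 U) : Finset (Option U) :=
  (Finset.univ.filter (fun u => u ∈ e)).image some

def allVertexVote (U : Type*) [Fintype U] [DecidableEq U] : Finset (Option U) :=
  (Finset.univ : Finset U).image some

def avScoreM {C : Type*} [DecidableEq C] (V : Multiset (Finset C)) (c : C) : ℕ :=
  (V.filter (fun v => c ∈ v)).card

def AVWinningM {C : Type*} [DecidableEq C] (V : Multiset (Finset C)) (k : ℕ)
    (W : Finset C) : Prop :=
  W.card = k ∧ ∀ c ∈ W, ∀ d ∉ W, avScoreM V d ≤ avScoreM V c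

set_option linter.unusedSectionVars false
section aux
variable {U : Type*} [Fintype U] [DecidableEq U]

lemma some_mem_edgeVote (e : Sym2 U) (u : U) : some u ∈ edgeVote e ↔ u ∈ e := by
  simp [edgeVote]

lemma none_not_mem_edgeVote (e : Sym2 U) : (none : Option U) ∉ edgeVote e := by
  simp [edgeVote]

lemma avScoreM_add (V₁ V₂ : Multiset (Finset (Option U))) (c : Option U) :
    avScoreM (V₁ + V₂) c = avScoreM V₁ c + avScoreM V₂ c := by
  simp [avScoreM]

lemma avScoreM_replicate (m : ℕ) (v : Finset (Option U)) (c : Option U) :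
    avScoreM (Multiset.replicate m v) c = if c ∈ v then m else 0 := by
  simp only [avScoreM]
  by_cases hc : c ∈ v
  · rw [if_pos hc, Multiset.filter_eq_self.2 (fun a ha => by
      rw [Multiset.eq_of_mem_replicate ha]; exact hc), Multiset.card_replicate]
  · rw [if_neg hc, Multiset.filter_eq_nil.2 (fun a ha => by
      rw [Multiset.eq_of_mem_replicate ha]; exact hc), Multiset.card_zero]

lemma avScoreM_map (s : Finset (Sym2 U)) (g : Sym2 U → Finset (Option U)) (c : Option U) :
    avScoreM (s.val.map g) c = (s.filter (fun e => c ∈ g e)).card := by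
  classical
  simp only [avScoreM, Multiset.filter_map]
  rw [Multiset.card_map]
  rfl

end aux

/-- forward direction of the reduction from Independent Set to AV swap bribery.
If the cubic graph `G` has an independent set of size `h`, then in the election consisting of
one edge voter per edge of `G` plus `3h` voters approving all vertex candidates, there is a set
`S` of `3h` distinct edge voters together with, for each, an approved vertex candidate `f e`
whose approval is swapped to `p` (= `none`), such that after these `3h` swaps `p` belongs to
some AV-winning committee of size `|U| - h + 1`. -/
theorem stmt_4 {U : Type*} [Fintype U] [DecidableEq U] (G : SimpleGraph U)
    [DecidableRel G.Adj] (hcubic : ∀ u : U, G.degree u = 3)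
    (h : ℕ) (hpos : 0 < h) (hh : h ≤ Fintype.card U)
    (I : Finset U) (hI : I.card = h) (hind : ∀ u ∈ I, ∀ w ∈ I, ¬ G.Adj u w) :
    ∃ (S : Finset (Sym2 U)) (f : Sym2 U → U),
      S ⊆ G.edgeFinset ∧ S.card = 3 * h ∧ (∀ e ∈ S, f e ∈ e) ∧
      ∃ W : Finset (Option U), (none : Option U) ∈ W ∧
        AVWinningM
          (G.edgeFinset.val.map (fun e =>
              if e ∈ S then insert none ((edgeVote e).erase (some (f e))) else edgeVote e)
            + Multiset.replicate (3 * h) (allVertexVote U))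
          (Fintype.card U - h + 1) W := by
  classical
  have hInonempty : I.Nonempty := Finset.card_pos.1 (by omega)
  set S : Finset (Sym2 U) := I.biUnion (fun u => G.incidenceFinset u) with hSdef
  have hmemS : ∀ e, e ∈ S ↔ e ∈ G.edgeFinset ∧ ∃ u ∈ I, u ∈ e := by
    intro e
    simp only [hSdef, Finset.mem_biUnion, SimpleGraph.mem_incidenceFinset,
      SimpleGraph.incidenceSet, Set.mem_setOf_eq, SimpleGraph.mem_edgeFinset]
    constructor
    · rintro ⟨u, hu, he, hue⟩; exact ⟨he, u, hu, hue⟩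
    · rintro ⟨he, u, hu, hue⟩; exact ⟨u, hu, he, hue⟩
  have hSsub : S ⊆ G.edgeFinset := fun e he => ((hmemS e).1 he).1
  have hScard : S.card = 3 * h := by
    rw [hSdef, Finset.card_biUnion]
    · rw [Finset.sum_congr rfl (fun u _ => by
        rw [SimpleGraph.card_incidenceFinset_eq_degree, hcubic])]
      simp [hI, mul_comm]
    · intro u hu w hw huw
      rw [Function.onFun, Finset.disjoint_left]
      intro e heu hew
      rw [SimpleGraph.mem_incidenceFinset] at heu hew
      have hadj : G.Adj u w := by
        have he2 : e ∈ G.edgeSet := heu.1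
        rw [(Sym2.mem_and_mem_iff huw).1 ⟨heu.2, hew.2⟩] at he2
        exact G.mem_edgeSet.1 he2
      exact hind u hu w hw hadj
  -- choice of f
  have hfex : ∀ e ∈ S, ∃ u, u ∈ I ∧ u ∈ e := by
    intro e he
    obtain ⟨_, u, hu, hue⟩ := (hmemS e).1 he
    exact ⟨u, hu, hue⟩
  set f : Sym2 U → U := fun e =>
    if hex : ∃ u, u ∈ I ∧ u ∈ e then hex.choose else hInonempty.choose with hfdef
  have hfI : ∀ e ∈ S, f e ∈ I ∧ f e ∈ e := by
    intro e he
    have hex := hfex e he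
    simp only [hfdef, dif_pos hex]
    exact hex.choose_spec
  have hfuniq : ∀ e ∈ G.edgeFinset, ∀ u ∈ I, u ∈ e → u = f e := by
    intro e he u hu hue
    have heS : e ∈ S := (hmemS e).2 ⟨he, u, hu, hue⟩
    obtain ⟨hfI1, hfI2⟩ := hfI e heS
    by_contra hne
    have : e = s(u, f e) := (Sym2.mem_and_mem_iff hne).1 ⟨hue, hfI2⟩
    have hadj : G.Adj u (f e) := by
      rw [SimpleGraph.mem_edgeFinset, this, SimpleGraph.mem_edgeSet] at he
      exact he
    exact hind u hu (f e) hfI1 hadj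
  refine ⟨S, f, hSsub, hScard, fun e he => (hfI e he).2, ?_⟩
  set g : Sym2 U → Finset (Option U) := fun e =>
    if e ∈ S then insert none ((edgeVote e).erase (some (f e))) else edgeVote e with hgdef
  -- membership facts
  have hnone : ∀ e, ((none : Option U) ∈ g e ↔ e ∈ S) := by
    intro e
    simp only [hgdef]
    split
    · simpa
    · simpa [none_not_mem_edgeVote e]
  have hsomeI : ∀ u ∈ I, ∀ e ∈ G.edgeFinset, some u ∉ g e := by
    intro u hu e he
    simp only [hgdef]
    split
    · rename_i heS
      simp only [Finset.mem_insert, Finset.mem_erase, some_mem_edgeVote]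
      rintro (hc | ⟨hne, hue⟩)
      · exact Option.some_ne_none _ hc
      · exact hne (by rw [hfuniq e he u hu hue])
    · rename_i heS
      rw [some_mem_edgeVote]
      intro hue
      exact heS ((hmemS e).2 ⟨he, u, hu, hue⟩)
  have hsomeN : ∀ u ∉ I, ∀ e, (some u ∈ g e ↔ u ∈ e) := by
    intro u hu e
    simp only [hgdef]
    split
    · rename_i heS
      have hfe : f e ∈ I := (hfI e heS).1
      have : some u ≠ some (f e) := by
        intro hc
        exact hu (by rw [Option.some.injEq] at hc; rw [hc]; exact hfe)
      simp [Finset.mem_insert, Finset.mem_erase, this, some_mem_edgeVote]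
    · exact some_mem_edgeVote e u
  -- score computations
  set V : Multiset (Finset (Option U)) :=
    G.edgeFinset.val.map g + Multiset.replicate (3 * h) (allVertexVote U) with hVdef
  have hscore_none : avScoreM V none = 3 * h := by
    rw [hVdef, avScoreM_add, avScoreM_map, avScoreM_replicate]
    have : G.edgeFinset.filter (fun e => (none : Option U) ∈ g e) = S := by
      ext e
      simp only [Finset.mem_filter, hnone]
      exact ⟨fun ⟨_, h2⟩ => h2, fun h2 => ⟨hSsub h2, h2⟩⟩
    rw [this, hScard]
    simp [allVertexVote]
  have hscore_I : ∀ u ∈ I, avScoreM V (some u) = 3 * h := by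
    intro u hu
    rw [hVdef, avScoreM_add, avScoreM_map, avScoreM_replicate]
    have : G.edgeFinset.filter (fun e => some u ∈ g e) = ∅ := by
      ext e
      simp only [Finset.mem_filter, Finset.notMem_empty, iff_false]
      rintro ⟨he, hmem⟩
      exact hsomeI u hu e he hmem
    rw [this]
    simp [allVertexVote]
  have hscore_N : ∀ u ∉ I, avScoreM V (some u) = 3 + 3 * h := by
    intro u hu
    rw [hVdef, avScoreM_add, avScoreM_map, avScoreM_replicate]
    have : G.edgeFinset.filter (fun e => some u ∈ g e) = G.incidenceFinset u := by
      ext e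
      simp only [Finset.mem_filter, hsomeN u hu, SimpleGraph.mem_incidenceFinset,
        SimpleGraph.incidenceSet, Set.mem_setOf_eq, SimpleGraph.mem_edgeFinset]
    rw [this, SimpleGraph.card_incidenceFinset_eq_degree, hcubic]
    simp [allVertexVote]
  -- committee
  set W : Finset (Option U) := insert none (Iᶜ.image some) with hWdef
  have hnone_not_img : ∀ (X : Finset U), (none : Option U) ∉ X.image some := by
    intro X hc
    simp at hc
  have hWcard : W.card = Fintype.card U - h + 1 := by
    rw [hWdef, Finset.card_insert_of_notMem (hnone_not_img _), Finset.card_image_of_injective _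
      (Option.some_injective U), Finset.card_compl, hI]
  refine ⟨W, Finset.mem_insert_self _ _, hWcard, ?_⟩
  intro c hc d hd
  -- d ∉ W means d = some u with u ∈ I
  have hd' : ∃ u ∈ I, d = some u := by
    rcases d with _ | u
    · exact absurd (Finset.mem_insert_self _ _) (hWdef ▸ hd)
    · refine ⟨u, ?_, rfl⟩
      by_contra hu
      apply hd
      rw [hWdef]
      exact Finset.mem_insert_of_mem (Finset.mem_image_of_mem some (Finset.mem_compl.2 hu))
  obtain ⟨u, hu, rfl⟩ := hd'
  rw [hscore_I u hu]
  -- c ∈ W: either none or some of a non-I vertex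
  rw [hWdef, Finset.mem_insert] at hc
  rcases hc with rfl | hc
  · rw [hscore_none]
  · obtain ⟨w, hw, rfl⟩ := Finset.mem_image.1 hc
    rw [hscore_N w (Finset.mem_compl.1 hw)]
    omega
end

section
/- Backward direction of the reduction from Independent Set to AV swap bribery: let G be a cubic graph with vertex set U, |U| = n, and let h be a positive integer with h ≤ n. Build the approval election with candidate set C = {p} ∪ {c_u : u ∈ U}, one edge voter v_e = {c_u, c_w} for each edge e = {u,w} of G, and 3h additional voters each approving all of {c_u : u ∈ U}. If there is a sequence of at most 3h approval swaps, each performed within an edge voter (each swap moving an approval from a candidate currently approved in that vote to a candidate not currently approved in it), after which p belongs to some AV-winning committee of size n − h + 1, then G has an independent set of size h. -/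
/-- Voter index type: one edge voter per edge of `G`, plus `3h` extra voters. -/
abbrev EIdx {U : Type*} [Fintype U] [DecidableEq U] (G : SimpleGraph U)
    [DecidableRel G.Adj] (h : ℕ) :=
  {e : Sym2 U // e ∈ G.edgeFinset} ⊕ Fin (3 * h)

/-- The initial election: each edge voter approves the endpoints of its edge, and each of the
`3h` further voters approves all vertex candidates. -/
def initVotes {U : Type*} [Fintype U] [DecidableEq U] (G : SimpleGraph U)
    [DecidableRel G.Adj] (h : ℕ) : EIdx G h → Finset (Option U)
  | Sum.inl e => edgeVote e.1
  | Sum.inr _ => allVertexVote U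

/-- AV score for an election given as an indexed family of votes. -/
def avScoreF {C ι : Type*} [DecidableEq C] [Fintype ι] (V : ι → Finset C) (c : C) : ℕ :=
  (Finset.univ.filter (fun i => c ∈ V i)).card

/-- One approval swap performed within some edge voter: an approved candidate `c` is replaced
by a non-approved candidate `d` in that vote; all other votes are unchanged. -/
def EdgeSwapStep {U : Type*} [Fintype U] [DecidableEq U] (G : SimpleGraph U)
    [DecidableRel G.Adj] (h : ℕ)
    (V V' : EIdx G h → Finset (Option U)) : Prop :=
  ∃ (e : {e : Sym2 U // e ∈ G.edgeFinset}) (c d : Option U),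
    c ∈ V (Sum.inl e) ∧ d ∉ V (Sum.inl e) ∧
    V' = Function.update V (Sum.inl e) (insert d ((V (Sum.inl e)).erase c))

lemma fin_telescope {M : Type*} [AddCommGroup M] {m : ℕ} (g : Fin (m + 1) → M) :
    g (Fin.last m) = g 0 + ∑ j : Fin m, (g j.succ - g j.castSucc) := by
  set f : ℕ → M := fun i => g ⟨min i m, Nat.lt_succ_of_le (min_le_right i m)⟩ with hf
  have h1 : ∑ i ∈ Finset.range m, (f (i + 1) - f i) = f m - f 0 := Finset.sum_range_sub f m
  have h2 : ∑ j : Fin m, (g j.succ - g j.castSucc)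
      = ∑ i ∈ Finset.range m, (f (i + 1) - f i) := by
    rw [← Fin.sum_univ_eq_sum_range (fun i => f (i + 1) - f i) m]
    refine Finset.sum_congr rfl fun j _ => ?_
    have hj := j.isLt
    have e1 : j.succ = (⟨min (j.val + 1) m, Nat.lt_succ_of_le (min_le_right _ _)⟩ : Fin (m + 1)) := by
      apply Fin.ext; simp only [Fin.val_succ]; omega
    have e2 : j.castSucc = (⟨min j.val m, Nat.lt_succ_of_le (min_le_right _ _)⟩ : Fin (m + 1)) := by
      apply Fin.ext; simp only [Fin.coe_castSucc]; omega
    rw [e1, e2]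
  have h3 : f m = g (Fin.last m) := by
    simp only [hf]; congr 1; apply Fin.ext; simp
  have h4 : f 0 = g 0 := by
    simp only [hf]; congr 1
  rw [h2, h1, h3, h4]; abel

lemma avScore_update {C ι : Type*} [DecidableEq C] [Fintype ι] [DecidableEq ι]
    (V : ι → Finset C) (i0 : ι) (c d : C) (hc : c ∈ V i0) (hd : d ∉ V i0) (x : C) :
    (avScoreF (Function.update V i0 (insert d ((V i0).erase c))) x : ℤ)
      = (avScoreF V x : ℤ) + (if d = x then 1 else 0) - (if c = x then 1 else 0) := by
  classical
  have hcd : c ≠ d := fun hcd => hd (hcd ▸ hc)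
  have key : ∀ W : ι → Finset C, (avScoreF W x : ℤ)
      = ∑ i ∈ Finset.univ.erase i0, (if x ∈ W i then (1 : ℤ) else 0)
        + (if x ∈ W i0 then 1 else 0) := by
    intro W
    rw [avScoreF, Finset.card_filter, ← Finset.sum_erase_add _ _ (Finset.mem_univ i0)]
    push_cast
    rfl
  rw [key, key]
  have h1 : ∀ i ∈ Finset.univ.erase i0,
      (if x ∈ Function.update V i0 (insert d ((V i0).erase c)) i then (1 : ℤ) else 0)
        = (if x ∈ V i then (1 : ℤ) else 0) := by
    intro i hi
    rw [Function.update_of_ne (Finset.ne_of_mem_erase hi)]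
  rw [Finset.sum_congr rfl h1, Function.update_self]
  have hmem : x ∈ insert d ((V i0).erase c) ↔ (x = d ∨ (x ≠ c ∧ x ∈ V i0)) := by
    simp only [Finset.mem_insert, Finset.mem_erase]
  by_cases hxd : d = x
  · subst hxd
    simp [hmem, hd, hcd]
  · by_cases hxc : c = x
    · subst hxc
      simp [hmem, hc, hcd, hxd]
    · have hx1 : ¬ x = d := fun hx => hxd hx.symm
      have hx2 : ¬ x = c := fun hx => hxc hx.symm
      simp [hmem, hx1, hx2, hxd, hxc]

lemma avScore_init_none {U : Type*} [Fintype U] [DecidableEq U] (G : SimpleGraph U)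
    [DecidableRel G.Adj] (h : ℕ) :
    avScoreF (initVotes G h) (none : Option U) = 0 := by
  rw [avScoreF, Finset.card_eq_zero, Finset.filter_eq_empty_iff]
  rintro (e | k) _ <;> simp [initVotes, edgeVote, allVertexVote]

lemma avScore_init_some {U : Type*} [Fintype U] [DecidableEq U] (G : SimpleGraph U)
    [DecidableRel G.Adj] (hcubic : ∀ u : U, G.degree u = 3) (h : ℕ) (u : U) :
    avScoreF (initVotes G h) (some u : Option U) = 3 * h + 3 := by
  classical
  rw [avScoreF, Finset.card_filter, Fintype.sum_sum_type]
  have h2 : (∑ e : {e : Sym2 U // e ∈ G.edgeFinset},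
      if (some u : Option U) ∈ initVotes G h (Sum.inl e) then 1 else 0) = G.degree u := by
    rw [← SimpleGraph.card_incidenceFinset_eq_degree, SimpleGraph.incidenceFinset_eq_filter,
      Finset.card_filter, ← Finset.sum_coe_sort G.edgeFinset (fun e => if u ∈ e then 1 else 0)]
    refine Finset.sum_congr rfl fun e _ => ?_
    simp [initVotes, edgeVote]
  have h3 : (∑ _b : Fin (3 * h),
      if (some u : Option U) ∈ initVotes G h (Sum.inr _b) then 1 else 0) = 3 * h := by
    simp [initVotes, allVertexVote]
  rw [h2, h3, hcubic u]
  omega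


/-- backward direction of the reduction from Independent Set to AV swap bribery.
If in the election built from a cubic graph `G` (edge voters plus `3h` all-vertex voters) there
is a sequence of at most `3h` approval swaps, each performed within an edge voter, after which
`p` (= `none`) belongs to some AV-winning committee of size `|U| - h + 1`, then `G` has an
independent set of size `h`. -/
theorem stmt_5 {U : Type*} [Fintype U] [DecidableEq U] (G : SimpleGraph U)
    [DecidableRel G.Adj] (hcubic : ∀ u : U, G.degree u = 3)
    (h : ℕ) (hpos : 0 < h) (hh : h ≤ Fintype.card U)
    (hswaps : ∃ m : ℕ, m ≤ 3 * h ∧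
      ∃ F : Fin (m + 1) → (EIdx G h → Finset (Option U)),
        F 0 = initVotes G h ∧
        (∀ j : Fin m, EdgeSwapStep G h (F j.castSucc) (F j.succ)) ∧
        ∃ W : Finset (Option U), (none : Option U) ∈ W ∧
          W.card = Fintype.card U - h + 1 ∧
          ∀ c ∈ W, ∀ d ∉ W, avScoreF (F (Fin.last m)) d ≤ avScoreF (F (Fin.last m)) c) :
    ∃ I : Finset U, I.card = h ∧ ∀ u ∈ I, ∀ w ∈ I, ¬ G.Adj u w := by
  classical
  obtain ⟨m, hm, F, hF0, hstep, W, hWnone, hWcard, hWwin⟩ := hswaps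
  choose ε cc dd hcc hdd hupd using hstep
  have hccdd : ∀ j, cc j ≠ dd j := fun j hj => hdd j (hj ▸ hcc j)
  set A : Option U → ℕ := fun x => (Finset.univ.filter (fun j : Fin m => dd j = x)).card with hA
  set R : Option U → ℕ := fun x => (Finset.univ.filter (fun j : Fin m => cc j = x)).card with hR
  -- score identity
  have hscore : ∀ x : Option U, (avScoreF (F (Fin.last m)) x : ℤ)
      = (avScoreF (F 0) x : ℤ) + A x - R x := by
    intro x
    have step : ∀ j : Fin m, ((avScoreF (F j.succ) x : ℤ) - (avScoreF (F j.castSucc) x : ℤ))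
        = (if dd j = x then (1 : ℤ) else 0) - (if cc j = x then 1 else 0) := by
      intro j
      rw [hupd j, avScore_update _ _ _ _ (hcc j) (hdd j)]
      ring
    have hA' : (∑ j : Fin m, if dd j = x then (1 : ℤ) else 0) = (A x : ℤ) := by
      simp only [hA, Finset.card_filter]
      push_cast
      rfl
    have hR' : (∑ j : Fin m, if cc j = x then (1 : ℤ) else 0) = (R x : ℤ) := by
      simp only [hR, Finset.card_filter]
      push_cast
      rfl
    rw [fin_telescope (fun i : Fin (m + 1) => (avScoreF (F i) x : ℤ))]
    rw [Finset.sum_congr rfl (fun j _ => step j), Finset.sum_sub_distrib, hA', hR']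
    ring
  have hAsum : ∑ x : Option U, A x = m := by
    simp only [hA, Finset.card_filter]
    rw [Finset.sum_comm]
    simp [Finset.sum_ite_eq]
  have hRsum : ∑ x : Option U, R x = m := by
    simp only [hR, Finset.card_filter]
    rw [Finset.sum_comm]
    simp [Finset.sum_ite_eq]
  set I : Finset U := Finset.univ.filter (fun u => some u ∉ W) with hI
  have hIcard : I.card = h := by
    have himg : I.image some = Finset.univ \ W := by
      ext x
      cases x with
      | none => simp [hI, hWnone]
      | some u => simp [hI]
    have h1 : (I.image some).card = I.card :=
      Finset.card_image_of_injective I (Option.some_injective U)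
    rw [himg] at h1
    have h2 : (Finset.univ \ W).card = Fintype.card (Option U) - W.card := by
      rw [Finset.card_sdiff_of_subset (Finset.subset_univ W), Finset.card_univ]
    rw [Fintype.card_option] at h2
    omega
  -- per-candidate inequality
  have hkey : ∀ u ∈ I, (3 * (h : ℤ) + 3) + (A (some u) : ℤ) - (R (some u) : ℤ)
      ≤ (A none : ℤ) - (R none : ℤ) := by
    intro u hu
    have hu' : some u ∉ W := by
      have := Finset.mem_filter.mp (hI ▸ hu)
      exact this.2
    have h0 := hWwin none hWnone (some u) hu'
    have hz : ((avScoreF (F (Fin.last m)) (some u) : ℕ) : ℤ)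
        ≤ ((avScoreF (F (Fin.last m)) none : ℕ) : ℤ) := by exact_mod_cast h0
    rw [hscore (some u), hscore none, hF0, avScore_init_none,
      avScore_init_some G hcubic h u] at hz
    push_cast at hz
    linarith
  have hs := Finset.sum_le_sum hkey
  rw [Finset.sum_const, hIcard, nsmul_eq_mul] at hs
  simp only [Finset.sum_sub_distrib, Finset.sum_add_distrib, Finset.sum_const, hIcard,
    nsmul_eq_mul] at hs
  -- bounds
  have hAPm : A none ≤ m := by
    rw [← hAsum]
    exact Finset.single_le_sum (fun _ _ => Nat.zero_le _) (Finset.mem_univ none)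
  have hRIm : ∑ u ∈ I, R (some u) ≤ m := by
    have h1 : ∑ x ∈ I.image some, R x = ∑ u ∈ I, R (some u) :=
      Finset.sum_image (fun x _ y _ hxy => Option.some_injective U hxy)
    rw [← h1, ← hRsum]
    exact Finset.sum_le_sum_of_subset (Finset.subset_univ _)
  have hAPz : (A none : ℤ) ≤ (m : ℤ) := by exact_mod_cast hAPm
  have hRIz : (∑ u ∈ I, (R (some u) : ℤ)) ≤ (m : ℤ) := by
    have : ((∑ u ∈ I, R (some u) : ℕ) : ℤ) ≤ (m : ℤ) := by exact_mod_cast hRIm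
    simpa using this
  have hAIz : (0 : ℤ) ≤ ∑ u ∈ I, (A (some u) : ℤ) :=
    Finset.sum_nonneg fun _ _ => Int.natCast_nonneg _
  have hRPz : (0 : ℤ) ≤ (R none : ℤ) := Int.natCast_nonneg _
  have hmz : (m : ℤ) ≤ 3 * h := by exact_mod_cast hm
  have hhz : (0 : ℤ) < h := by exact_mod_cast hpos
  have hmul1 : (h : ℤ) * (A none : ℤ) ≤ (h : ℤ) * m :=
    mul_le_mul_of_nonneg_left hAPz (le_of_lt hhz)
  have hmul2 : (h : ℤ) * (m : ℤ) ≤ (h : ℤ) * (3 * h) :=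
    mul_le_mul_of_nonneg_left hmz (le_of_lt hhz)
  have hmul3 : (0 : ℤ) ≤ (h : ℤ) * (R none : ℤ) := mul_nonneg (le_of_lt hhz) hRPz
  rw [mul_sub] at hs
  -- m = 3h
  have hge : 3 * (h : ℤ) ≤ m := by linarith
  have hm3 : (m : ℤ) = 3 * h := le_antisymm hmz hge
  have hP23 : (h : ℤ) * (m : ℤ) = (h : ℤ) * (3 * h) := by rw [hm3]
  have hRIeq : (∑ u ∈ I, (R (some u) : ℤ)) = m := by linarith
  have hAIeq : (∑ u ∈ I, (A (some u) : ℤ)) = 0 := by linarith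
  have hP1 : (h : ℤ) * ((A none : ℕ) : ℤ) = (h : ℤ) * (m : ℤ) := by linarith
  have hAPeq : ((A none : ℕ) : ℤ) = m := mul_left_cancel₀ (ne_of_gt hhz) hP1
  have hmn : m = 3 * h := by exact_mod_cast hm3
  have hAPn : A none = m := by exact_mod_cast hAPeq
  have hRIn : ∑ u ∈ I, R (some u) = m := by exact_mod_cast hRIeq
  -- every added candidate is `none`
  have hddnone : ∀ j : Fin m, dd j = none := by
    have hcard : (Finset.univ.filter (fun j : Fin m => dd j = none)).card
        = Fintype.card (Fin m) := by
      rw [Fintype.card_fin]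
      exact hAPn
    intro j
    have huniv := Finset.eq_univ_of_card _ hcard
    have : j ∈ Finset.univ.filter (fun j : Fin m => dd j = none) := by
      rw [huniv]; exact Finset.mem_univ j
    exact (Finset.mem_filter.mp this).2
  -- every removed candidate is `some u` with `u ∈ I`
  have hccI : ∀ j : Fin m, ∃ u ∈ I, cc j = some u := by
    have hswap2 : ∑ u ∈ I, R (some u)
        = ∑ j : Fin m, ∑ u ∈ I, (if cc j = some u then 1 else 0) := by
      simp only [hR, Finset.card_filter]
      rw [Finset.sum_comm]
    have hle : ∀ j : Fin m, (∑ u ∈ I, if cc j = some u then 1 else 0) ≤ 1 := by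
      intro j
      by_cases hj : ∃ u ∈ I, cc j = some u
      · obtain ⟨u0, hu0, hju0⟩ := hj
        have heach : ∀ u ∈ I, (if cc j = some u then 1 else 0) = if u = u0 then 1 else 0 := by
          intro u _
          by_cases hu : u = u0
          · simp [hu, hju0]
          · have : cc j ≠ some u := by
              rw [hju0]
              simp [Option.some.injEq]
              exact fun hx => hu hx.symm
            simp [this, hu]
        rw [Finset.sum_congr rfl heach, Finset.sum_ite_eq' I u0 (fun _ => 1)]
        simp [hu0]
      · have heach : ∀ u ∈ I, (if cc j = some u then 1 else 0) = 0 := by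
          intro u hu
          have : cc j ≠ some u := fun hx => hj ⟨u, hu, hx⟩
          simp [this]
        rw [Finset.sum_congr rfl heach]
        simp
    have hall1 : ∀ j : Fin m, (∑ u ∈ I, if cc j = some u then 1 else 0) = 1 := by
      by_contra hcon
      push_neg at hcon
      obtain ⟨j0, hj0⟩ := hcon
      have hlt : (∑ u ∈ I, if cc j0 = some u then 1 else 0) < 1 := lt_of_le_of_ne (hle j0) hj0
      have hlt2 : (∑ j : Fin m, ∑ u ∈ I, if cc j = some u then 1 else 0)
          < ∑ _j : Fin m, 1 :=
        Finset.sum_lt_sum (fun j _ => hle j) ⟨j0, Finset.mem_univ j0, hlt⟩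
      rw [← hswap2, hRIn] at hlt2
      simp [Finset.card_univ] at hlt2
    intro j
    by_contra hno
    push_neg at hno
    have : (∑ u ∈ I, if cc j = some u then 1 else 0) = 0 :=
      Finset.sum_eq_zero fun u hu => by simp [hno u hu]
    rw [hall1 j] at this
    omega
  -- monotone spread of `none` and injectivity of the sequence of touched voters
  have hmono : ∀ (j : Fin m) (v : EIdx G h),
      (none : Option U) ∈ F j.castSucc v → none ∈ F j.succ v := by
    intro j v hv
    rw [hupd j]
    by_cases hveq : v = Sum.inl (ε j)
    · subst hveq
      rw [Function.update_self]
      simp [hddnone j]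
    · rw [Function.update_of_ne hveq]
      exact hv
  have hafter : ∀ j : Fin m, (none : Option U) ∈ F j.succ (Sum.inl (ε j)) := by
    intro j
    rw [hupd j, Function.update_self]
    simp [hddnone j]
  have hprop : ∀ (b : ℕ) (hb : b ≤ m) (a : ℕ) (ha : a ≤ b) (v : EIdx G h),
      (none : Option U) ∈ F ⟨a, by omega⟩ v → none ∈ F ⟨b, by omega⟩ v := by
    intro b
    induction b with
    | zero =>
      intro _ a ha v hv
      have ha0 : a = 0 := by omega
      subst ha0
      exact hv
    | succ b ih =>
      intro hb a ha v hv
      by_cases hab : a = b + 1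
      · subst hab
        exact hv
      · have h1 : (none : Option U) ∈ F ⟨b, by omega⟩ v := ih (by omega) a (by omega) v hv
        have h2 := hmono ⟨b, by omega⟩ v (by exact h1)
        exact h2
  have hεinj : Function.Injective ε := by
    have key : ∀ j j' : Fin m, j < j' → ε j ≠ ε j' := by
      intro j j' hlt heq
      have hj'm : (j' : ℕ) ≤ m := le_of_lt j'.isLt
      have hj1 : (j : ℕ) + 1 ≤ (j' : ℕ) := hlt
      have h1 : (none : Option U) ∈ F ⟨(j : ℕ) + 1, Nat.succ_lt_succ j.isLt⟩ (Sum.inl (ε j)) := by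
        have := hafter j
        exact this
      have h2 : (none : Option U) ∈ F ⟨(j' : ℕ), by omega⟩ (Sum.inl (ε j)) :=
        hprop (j' : ℕ) (by omega) ((j : ℕ) + 1) (by omega) _ h1
      rw [heq] at h2
      have h3 : (none : Option U) ∈ F j'.castSucc (Sum.inl (ε j')) := h2
      exact hdd j' (by rw [hddnone j']; exact h3)
    intro j j' heq
    rcases lt_trichotomy j j' with hlt | heqq | hlt
    · exact absurd heq (key _ _ hlt)
    · exact heqq
    · exact absurd heq.symm (key _ _ hlt)
  -- each edge voter is untouched before its (unique) swap
  have hinit : ∀ j : Fin m, F j.castSucc (Sum.inl (ε j)) = edgeVote (ε j).1 := by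
    intro j
    have hjm := j.isLt
    have gen : ∀ (b : ℕ) (_ : b ≤ (j : ℕ)), F ⟨b, by omega⟩ (Sum.inl (ε j)) = edgeVote (ε j).1 := by
      intro b
      induction b with
      | zero =>
        intro _
        have h0 : (⟨0, by omega⟩ : Fin (m + 1)) = 0 := by
          apply Fin.ext; simp
        rw [h0, hF0]
        rfl
      | succ b ih =>
        intro hb
        have hbm : b < m := by omega
        have hne : (⟨b, hbm⟩ : Fin m) ≠ j := by
          intro hcon
          have : b = (j : ℕ) := by rw [← hcon]
          omega
        have hne2 : Sum.inl (ε j) ≠ (Sum.inl (ε ⟨b, hbm⟩) : EIdx G h) := by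
          intro hcon
          exact hne (hεinj (Sum.inl.inj hcon)).symm
        have hstep2 : F (⟨b, hbm⟩ : Fin m).succ (Sum.inl (ε j))
            = F (⟨b, hbm⟩ : Fin m).castSucc (Sum.inl (ε j)) := by
          rw [hupd ⟨b, hbm⟩, Function.update_of_ne hne2]
        have hcast : F (⟨b, hbm⟩ : Fin m).castSucc (Sum.inl (ε j))
            = F ⟨b, by omega⟩ (Sum.inl (ε j)) := rfl
        have hsucc : F (⟨b, hbm⟩ : Fin m).succ (Sum.inl (ε j))
            = F ⟨b + 1, by omega⟩ (Sum.inl (ε j)) := rfl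
        rw [← hsucc, hstep2, hcast, ih (by omega)]
    have := gen (j : ℕ) le_rfl
    exact this
  -- the removed vertex is an endpoint of the swapped edge
  have hend : ∀ (j : Fin m) (u : U), cc j = some u → u ∈ (ε j).1 := by
    intro j u hju
    have := hcc j
    rw [hinit j, hju] at this
    simpa [edgeVote] using this
  -- injection from swaps removing u into edges incident to u
  have hmapsto : ∀ u : U, ∀ j ∈ Finset.univ.filter (fun j : Fin m => cc j = some u),
      (ε j).1 ∈ G.incidenceFinset u := by
    intro u j hj
    rw [SimpleGraph.incidenceFinset_eq_filter, Finset.mem_filter]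
    exact ⟨(ε j).2, hend j u (Finset.mem_filter.mp hj).2⟩
  have hinjOn : ∀ u : U, Set.InjOn (fun j => (ε j).1)
      ↑(Finset.univ.filter (fun j : Fin m => cc j = some u)) :=
    fun u j _ j' _ hjj' => hεinj (Subtype.ext hjj')
  have hR3 : ∀ u : U, R (some u) ≤ 3 := by
    intro u
    have hcle := Finset.card_le_card_of_injOn _ (hmapsto u) (hinjOn u)
    rw [SimpleGraph.card_incidenceFinset_eq_degree, hcubic u] at hcle
    exact hcle
  have hall3 : ∀ u ∈ I, R (some u) = 3 := by
    have hsum3 : ∑ u ∈ I, R (some u) = ∑ _u ∈ I, 3 := by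
      rw [hRIn, Finset.sum_const, hIcard, smul_eq_mul, hmn]
      ring
    exact (Finset.sum_eq_sum_iff_of_le (fun u _ => hR3 u)).mp hsum3
  -- swaps removing u cover all edges at u
  have hsurj : ∀ u ∈ I, ∀ e0 ∈ G.incidenceFinset u,
      ∃ j : Fin m, cc j = some u ∧ (ε j).1 = e0 := by
    intro u hu e0 he0
    have himg : (Finset.univ.filter (fun j : Fin m => cc j = some u)).image (fun j => (ε j).1)
        = G.incidenceFinset u := by
      apply Finset.eq_of_subset_of_card_le
      · intro x hx
        obtain ⟨j, hj, rfl⟩ := Finset.mem_image.mp hx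
        exact hmapsto u j hj
      · rw [Finset.card_image_of_injOn (hinjOn u),
          SimpleGraph.card_incidenceFinset_eq_degree, hcubic u]
        exact le_of_eq (hall3 u hu).symm
    rw [← himg] at he0
    obtain ⟨j, hj, hje⟩ := Finset.mem_image.mp he0
    exact ⟨j, (Finset.mem_filter.mp hj).2, hje⟩
  -- conclusion
  refine ⟨I, hIcard, ?_⟩
  intro u hu w hw hadj
  have hne := hadj.ne
  have he : s(u, w) ∈ G.edgeFinset := by
    rw [SimpleGraph.mem_edgeFinset]
    exact hadj
  have heu : s(u, w) ∈ G.incidenceFinset u := by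
    rw [SimpleGraph.incidenceFinset_eq_filter, Finset.mem_filter]
    exact ⟨he, Sym2.mem_mk_left u w⟩
  have hew : s(u, w) ∈ G.incidenceFinset w := by
    rw [SimpleGraph.incidenceFinset_eq_filter, Finset.mem_filter]
    exact ⟨he, Sym2.mem_mk_right u w⟩
  obtain ⟨j, hj1, hj2⟩ := hsurj u hu _ heu
  obtain ⟨j', hj1', hj2'⟩ := hsurj w hw _ hew
  have hjj : j = j' := hεinj (Subtype.ext (hj2.trans hj2'.symm))
  rw [hjj, hj1'] at hj1
  exact hne (Option.some.inj hj1).symm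
end

section
/- Forward direction of the reduction from Restricted X3C to SAV swap bribery: let X = {x_1,…,x_{3n}} and let 𝒮 = {S_1,…,S_{3n}} be three-element subsets of X such that each element of X belongs to exactly three sets of 𝒮, and let N be a positive integer. Build the approval election with candidates C = 𝒮 ∪ D ∪ {p}, where D is a set of N dummy candidates; for each element x_i one element voter approving exactly the three sets of 𝒮 that contain x_i; n·(N+3n) − 1 voters each approving all candidates in 𝒮 ∪ D; and 10nN voters each approving all candidates in D. If there exist n sets in 𝒮 whose union is X (an exact cover), then there exist 3n approval swaps, each moving an approval from a set candidate to p within a distinct element voter, after which p belongs to some SAV-winning committee of size N + 2n + 1. -/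
/-- Candidates for the X3C reduction: `some (Sum.inl j)` is the set candidate `S_j`,
`some (Sum.inr d)` is a dummy candidate, and `none` is the preferred candidate `p`. -/
abbrev XCand (n N : ℕ) := Option (Fin (3 * n) ⊕ Fin N)

/-- The element voter for `x`: approves exactly the set candidates corresponding to the sets
containing `x`. -/
def elemVote (n N : ℕ) (S : Fin (3 * n) → Finset (Fin (3 * n))) (x : Fin (3 * n)) :
    Finset (XCand n N) :=
  (Finset.univ.filter (fun j => x ∈ S j)).image (fun j => some (Sum.inl j))

/-- The vote approving all set candidates and all dummy candidates. -/
def sdVote (n N : ℕ) : Finset (XCand n N) :=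
  (Finset.univ : Finset (Fin (3 * n) ⊕ Fin N)).image some

/-- The vote approving all dummy candidates. -/
def dVote (n N : ℕ) : Finset (XCand n N) :=
  (Finset.univ : Finset (Fin N)).image (fun d => some (Sum.inr d))

/-- SAV score in an election given as a multiset of votes: each vote contributes `1/|v|`
to each approved candidate. -/
def savScoreM {C : Type*} [DecidableEq C] (V : Multiset (Finset C)) (c : C) : ℚ :=
  ((V.filter (fun v => c ∈ v)).map (fun v => (v.card : ℚ)⁻¹)).sum

/-- `W` is an SAV-winning committee of size `k` in the election `V`. -/
def SAVWinningM {C : Type*} [DecidableEq C] (V : Multiset (Finset C)) (k : ℕ)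
    (W : Finset C) : Prop :=
  W.card = k ∧ ∀ c ∈ W, ∀ d ∉ W, savScoreM V d ≤ savScoreM V c

lemma savScoreM_eq_sum {C : Type*} [DecidableEq C] (V : Multiset (Finset C)) (c : C) :
    savScoreM V c = (V.map (fun v => if c ∈ v then (v.card : ℚ)⁻¹ else 0)).sum := by
  induction V using Multiset.induction_on with
  | empty => simp [savScoreM]
  | cons a s ih =>
    rw [Multiset.map_cons, Multiset.sum_cons, ← ih]
    unfold savScoreM
    rw [Multiset.filter_cons]
    split <;> simp_all

lemma savScoreM_add {C : Type*} [DecidableEq C] (A B : Multiset (Finset C)) (c : C) :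
    savScoreM (A + B) c = savScoreM A c + savScoreM B c := by
  simp [savScoreM, Multiset.filter_add]

lemma savScoreM_replicate {C : Type*} [DecidableEq C] (m : ℕ) (v : Finset C) (c : C) :
    savScoreM (Multiset.replicate m v) c
      = if c ∈ v then (m : ℚ) * (v.card : ℚ)⁻¹ else 0 := by
  rw [savScoreM_eq_sum, Multiset.map_replicate, Multiset.sum_replicate]
  split <;> simp [nsmul_eq_mul]

lemma savScoreM_map {C α : Type*} [DecidableEq C] (f : α → Finset C)
    (s : Finset α) (c : C) :
    savScoreM (s.val.map f) c = ∑ x ∈ s, if c ∈ f x then ((f x).card : ℚ)⁻¹ else 0 := by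
  rw [savScoreM_eq_sum, Multiset.map_map]
  rfl

lemma card_sdVote (n N : ℕ) : (sdVote n N).card = 3 * n + N := by
  rw [sdVote, Finset.card_image_of_injective _ (Option.some_injective _)]
  simp

lemma mem_sdVote (n N : ℕ) (c : XCand n N) : c ∈ sdVote n N ↔ c ≠ none := by
  cases c <;> simp [sdVote]

lemma card_dVote (n N : ℕ) : (dVote n N).card = N := by
  rw [dVote, Finset.card_image_of_injective]
  · simp
  · intro a b h; simpa using h

lemma mem_dVote (n N : ℕ) (c : XCand n N) :
    c ∈ dVote n N ↔ ∃ d, c = some (Sum.inr d) := by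
  simp [dVote, eq_comm]

/-- forward direction of the reduction from Restricted X3C to SAV swap bribery.
If the Restricted X3C instance has an exact cover (n sets whose union is X), then in the
election consisting of the `3n` element voters, `n(N+3n) - 1` voters approving all set and
dummy candidates, and `10nN` voters approving all dummy candidates, there are `3n` approval
swaps — one in each (distinct) element voter, moving the approval of a set candidate
`some (Sum.inl (g x))` approved there to `p` (= `none`) — after which `p` belongs to some
SAV-winning committee of size `N + 2n + 1`. -/
theorem stmt_6 (n N : ℕ) (hn : 0 < n) (hN : 0 < N)
    (S : Fin (3 * n) → Finset (Fin (3 * n)))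
    (hS3 : ∀ j, (S j).card = 3)
    (hx3 : ∀ x : Fin (3 * n), (Finset.univ.filter (fun j => x ∈ S j)).card = 3)
    (hcover : ∃ T : Finset (Fin (3 * n)), T.card = n ∧ ∀ x, ∃ j ∈ T, x ∈ S j) :
    ∃ g : Fin (3 * n) → Fin (3 * n), (∀ x, x ∈ S (g x)) ∧
      ∃ W : Finset (XCand n N), (none : XCand n N) ∈ W ∧
        SAVWinningM
          ((Finset.univ : Finset (Fin (3 * n))).val.map
              (fun x => insert none ((elemVote n N S x).erase (some (Sum.inl (g x)))))
            + Multiset.replicate (n * (N + 3 * n) - 1) (sdVote n N)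
            + Multiset.replicate (10 * n * N) (dVote n N))
          (N + 2 * n + 1) W := by
  obtain ⟨T, hTcard, hTcov⟩ := hcover
  -- every x lies in exactly one member of T
  have hfilter1 : ∀ x : Fin (3 * n), (T.filter (fun j => x ∈ S j)).card = 1 := by
    have hge : ∀ x : Fin (3 * n), 1 ≤ (T.filter (fun j => x ∈ S j)).card := by
      intro x
      obtain ⟨j, hjT, hjx⟩ := hTcov x
      exact Finset.card_pos.mpr ⟨j, Finset.mem_filter.mpr ⟨hjT, hjx⟩⟩
    have hsum : ∑ x : Fin (3 * n), (T.filter (fun j => x ∈ S j)).card = 3 * n := by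
      have h1 : ∀ x : Fin (3 * n), (T.filter (fun j => x ∈ S j)).card
          = ∑ j ∈ T, if x ∈ S j then 1 else 0 := fun x => Finset.card_filter _ _
      simp_rw [h1]
      rw [Finset.sum_comm]
      have h2 : ∀ j, (∑ x : Fin (3 * n), if x ∈ S j then 1 else 0) = 3 := by
        intro j
        rw [← Finset.card_filter]
        rw [Finset.filter_univ_mem]
        exact hS3 j
      rw [Finset.sum_congr rfl (fun j _ => h2 j)]
      rw [Finset.sum_const, hTcard, smul_eq_mul]
      omega
    intro x
    by_contra hne
    have h2 : 2 ≤ (T.filter (fun j => x ∈ S j)).card := by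
      have := hge x; omega
    have hrest : (Finset.univ.erase x).card • 1
        ≤ ∑ y ∈ Finset.univ.erase x, (T.filter (fun j => y ∈ S j)).card :=
      Finset.card_nsmul_le_sum _ _ _ (fun y _ => hge y)
    have hsplit : ∑ y ∈ Finset.univ.erase x, (T.filter (fun j => y ∈ S j)).card
        + (T.filter (fun j => x ∈ S j)).card
        = ∑ y : Fin (3 * n), (T.filter (fun j => y ∈ S j)).card :=
      Finset.sum_erase_add _ _ (Finset.mem_univ x)
    have hcard : (Finset.univ.erase x).card = 3 * n - 1 := by
      rw [Finset.card_erase_of_mem (Finset.mem_univ x)]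
      simp
    simp only [smul_eq_mul, mul_one, hcard] at hrest
    omega
  have hchoose : ∀ x, ∃ j, T.filter (fun j => x ∈ S j) = {j} :=
    fun x => Finset.card_eq_one.mp (hfilter1 x)
  choose g hg using hchoose
  have hgT : ∀ x, g x ∈ T ∧ x ∈ S (g x) := by
    intro x
    have : g x ∈ T.filter (fun j => x ∈ S j) := by rw [hg x]; exact Finset.mem_singleton_self _
    exact Finset.mem_filter.mp this
  have huniq : ∀ x j, j ∈ T → x ∈ S j → j = g x := by
    intro x j hjT hjx
    have : j ∈ T.filter (fun i => x ∈ S i) := Finset.mem_filter.mpr ⟨hjT, hjx⟩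
    rw [hg x] at this
    exact Finset.mem_singleton.mp this
  refine ⟨g, fun x => (hgT x).2, ?_⟩
  set bv : Fin (3 * n) → Finset (XCand n N) :=
    fun x => insert none ((elemVote n N S x).erase (some (Sum.inl (g x)))) with hbv
  -- membership facts for bv
  have hnone_elem : ∀ x, (none : XCand n N) ∉ elemVote n N S x := by
    intro x; simp [elemVote]
  have hgx_elem : ∀ x, some (Sum.inl (g x)) ∈ elemVote n N S x := by
    intro x; simp only [elemVote, Finset.mem_image]
    exact ⟨g x, Finset.mem_filter.mpr ⟨Finset.mem_univ _, (hgT x).2⟩, rfl⟩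
  have hcard_bv : ∀ x, (bv x).card = 3 := by
    intro x
    rw [hbv]
    rw [Finset.card_insert_of_notMem (fun h => hnone_elem x (Finset.mem_of_mem_erase h))]
    rw [Finset.card_erase_of_mem (hgx_elem x)]
    rw [elemVote, Finset.card_image_of_injective _ (fun a b h => by simpa using h), hx3]
  have hmem_bv_none : ∀ x, (none : XCand n N) ∈ bv x := fun x => Finset.mem_insert_self _ _
  have hmem_bv_inr : ∀ x d, (some (Sum.inr d) : XCand n N) ∉ bv x := by
    intro x d
    simp [hbv, elemVote]
  have hmem_bv_inl : ∀ x j, (some (Sum.inl j) : XCand n N) ∈ bv x ↔ (x ∈ S j ∧ j ≠ g x) := by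
    intro x j
    simp only [hbv, Finset.mem_insert, Finset.mem_erase, elemVote, Finset.mem_image,
      Finset.mem_filter, Finset.mem_univ, true_and, Option.some.injEq, Sum.inl.injEq,
      reduceCtorEq, false_or]
    constructor
    · rintro ⟨hne, a, ha, rfl⟩
      exact ⟨ha, fun h => hne (by rw [h])⟩
    · rintro ⟨hj, hne⟩
      exact ⟨by simpa using hne, j, hj, rfl⟩
  -- the score of each candidate
  set M1 : ℕ := n * (N + 3 * n) - 1 with hM1
  set V : Multiset (Finset (XCand n N)) :=
    (Finset.univ : Finset (Fin (3 * n))).val.map bv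
      + Multiset.replicate M1 (sdVote n N)
      + Multiset.replicate (10 * n * N) (dVote n N) with hV
  have ha_pos : (0:ℚ) < ((3 * n + N : ℕ) : ℚ) := by positivity
  have hscore : ∀ c : XCand n N, savScoreM V c
      = (∑ x : Fin (3 * n), if c ∈ bv x then (3:ℚ)⁻¹ else 0)
        + (if c ∈ sdVote n N then (M1 : ℚ) * ((3 * n + N : ℕ) : ℚ)⁻¹ else 0)
        + (if c ∈ dVote n N then ((10 * n * N : ℕ) : ℚ) * ((N : ℕ) : ℚ)⁻¹ else 0) := by
    intro c
    rw [hV, savScoreM_add, savScoreM_add, savScoreM_map, savScoreM_replicate,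
      savScoreM_replicate, card_sdVote, card_dVote]
    congr 1
    congr 1
    exact Finset.sum_congr rfl (fun x _ => by rw [hcard_bv x]; norm_num)
  -- individual scores
  have hscore_none : savScoreM V none = (n : ℚ) := by
    rw [hscore]
    rw [if_neg (by simp [mem_sdVote])]
    rw [if_neg (by simp [mem_dVote])]
    rw [Finset.sum_congr rfl (fun x _ => if_pos (hmem_bv_none x)), Finset.sum_const,
      Finset.card_univ, Fintype.card_fin, add_zero, add_zero, nsmul_eq_mul]
    push_cast
    ring
  have hscore_inr : ∀ d, savScoreM V (some (Sum.inr d))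
      = (M1 : ℚ) * ((3 * n + N : ℕ) : ℚ)⁻¹ + 10 * n := by
    intro d
    have h1 : (some (Sum.inr d) : XCand n N) ∈ sdVote n N := (mem_sdVote n N _).mpr (by simp)
    have h2 : (some (Sum.inr d) : XCand n N) ∈ dVote n N := (mem_dVote n N _).mpr ⟨d, rfl⟩
    rw [hscore, if_pos h1, if_pos h2]
    rw [Finset.sum_congr rfl (fun x _ => if_neg (hmem_bv_inr x d)), Finset.sum_const_zero,
      zero_add]
    have hNne : ((N:ℕ):ℚ) ≠ 0 := by positivity
    push_cast
    field_simp
  have hcnt : ∀ j : Fin (3 * n),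
      (∑ x : Fin (3 * n), if (some (Sum.inl j) : XCand n N) ∈ bv x then (3:ℚ)⁻¹ else 0)
      = if j ∈ T then 0 else 1 := by
    intro j
    simp_rw [hmem_bv_inl]
    rw [← Finset.sum_filter]
    by_cases hj : j ∈ T
    · rw [if_pos hj]
      convert Finset.sum_empty
      rw [Finset.filter_eq_empty_iff]
      rintro x - ⟨hxj, hne⟩
      exact hne (huniq x j hj hxj)
    · rw [if_neg hj]
      have : Finset.univ.filter (fun x => x ∈ S j ∧ j ≠ g x) = S j := by
        ext x
        simp only [Finset.mem_filter, Finset.mem_univ, true_and, and_iff_left_iff_imp]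
        intro hxj h
        exact hj (h ▸ (hgT x).1)
      rw [this, Finset.sum_const, hS3 j]
      norm_num
  have hscore_inl : ∀ j : Fin (3 * n), savScoreM V (some (Sum.inl j))
      = (if j ∈ T then 0 else 1) + (M1 : ℚ) * ((3 * n + N : ℕ) : ℚ)⁻¹ := by
    intro j
    have h1 : (some (Sum.inl j) : XCand n N) ∈ sdVote n N := (mem_sdVote n N _).mpr (by simp)
    have h2 : (some (Sum.inl j) : XCand n N) ∉ dVote n N := by
      rw [mem_dVote]; rintro ⟨d, hd⟩; simp at hd
    rw [hscore, if_pos h1, if_neg h2, hcnt]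
    ring
  -- the committee
  set W : Finset (XCand n N) :=
    insert none ((Tᶜ.image (fun j => (some (Sum.inl j) : XCand n N)))
      ∪ (Finset.univ.image (fun d : Fin N => (some (Sum.inr d) : XCand n N)))) with hW
  have hnoneW : (none : XCand n N) ∈ W := Finset.mem_insert_self _ _
  refine ⟨W, hnoneW, ?_, ?_⟩
  · -- cardinality
    rw [hW]
    rw [Finset.card_insert_of_notMem (by simp)]
    rw [Finset.card_union_of_disjoint (by simp [Finset.disjoint_left])]
    rw [Finset.card_image_of_injective _ (fun a b h => by simpa using h)]
    rw [Finset.card_image_of_injective _ (fun a b h => by simpa using h)]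
    rw [Finset.card_compl, hTcard, Finset.card_univ, Fintype.card_fin, Fintype.card_fin]
    omega
  · -- winning condition
    intro c hc d hd
    have hd' : ∃ j, j ∈ T ∧ d = some (Sum.inl j) := by
      rcases d with _ | (j | e)
      · exact absurd hnoneW hd
      · refine ⟨j, ?_, rfl⟩
        by_contra hjT
        exact hd (by simp [hW, hjT])
      · exact absurd (by simp [hW]) hd
    obtain ⟨j, hjT, rfl⟩ := hd'
    rw [hscore_inl j, if_pos hjT, zero_add]
    -- bound: M1 / (3n+N) ≤ each score in W
    have hM1le : (M1 : ℚ) * ((3 * n + N : ℕ) : ℚ)⁻¹ ≤ (n : ℚ) := by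
      rw [← div_eq_mul_inv, div_le_iff₀ ha_pos]
      have : M1 ≤ n * (3 * n + N) := by
        rw [hM1, Nat.add_comm N (3 * n)]; exact Nat.sub_le _ _
      calc (M1 : ℚ) ≤ ((n * (3 * n + N) : ℕ) : ℚ) := by exact_mod_cast this
        _ = (n : ℚ) * ((3 * n + N : ℕ) : ℚ) := by push_cast; ring
    rcases Finset.mem_insert.mp hc with rfl | hc'
    · rw [hscore_none]; exact hM1le
    · rcases Finset.mem_union.mp hc' with hc'' | hc''
      · obtain ⟨j', hj', rfl⟩ := Finset.mem_image.mp hc''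
        rw [hscore_inl j', if_neg (Finset.mem_compl.mp hj')]
        linarith
      · obtain ⟨e, -, rfl⟩ := Finset.mem_image.mp hc''
        rw [hscore_inr e]
        have : (0:ℚ) ≤ 10 * n := by positivity
        linarith
end

section
/- Under SAV with unit-cost additions, bribery by adding approvals can be assumed to add approvals only for the preferred candidate: let (C,V) be an approval election, p ∈ C, and 1 ≤ k ≤ |C|. If applying some set A of b approval additions (each adding some candidate to some vote that does not already approve it) results in an election in which p belongs to some SAV-winning committee of size k, then there is a set A' of at most b approval additions, each adding an approval for p to a vote not approving p, whose application results in an election in which p belongs to some SAV-winning committee of size k. -/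
/-- SAV score of candidate `c`: each voter contributes `1/|v|` to each approved candidate. -/
def savScore {C : Type*} [DecidableEq C] {n : ℕ} (V : Fin n → Finset C) (c : C) : ℚ :=
  ∑ i : Fin n, if c ∈ V i then ((V i).card : ℚ)⁻¹ else 0

/-- `W` is an SAV-winning committee of size `k`. -/
def SAVWinning {C : Type*} [DecidableEq C] {n : ℕ}
    (V : Fin n → Finset C) (k : ℕ) (W : Finset C) : Prop :=
  W.card = k ∧ ∀ c ∈ W, ∀ d ∉ W, savScore V d ≤ savScore V c

/-- Top-m selection lemma. -/
lemma topk {C : Type*} [DecidableEq C] :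
    ∀ (m : ℕ) (E : Finset C) (s : C → ℚ), m ≤ E.card →
      ∃ B ⊆ E, B.card = m ∧ ∀ c ∈ B, ∀ d ∈ E \ B, s d ≤ s c := by
  intro m
  induction m with
  | zero => intro E s _; exact ⟨∅, Finset.empty_subset _, rfl, by simp⟩
  | succ m ih =>
    intro E s hm
    have hne : E.Nonempty := Finset.card_pos.mp (by omega)
    obtain ⟨c₀, hc₀E, hc₀max⟩ := E.exists_max_image s hne
    have hm' : m ≤ (E.erase c₀).card := by
      rw [Finset.card_erase_of_mem hc₀E]; omega
    obtain ⟨B, hBE, hBcard, hB⟩ := ih (E.erase c₀) s hm'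
    have hc₀B : c₀ ∉ B := fun h => (Finset.mem_erase.mp (hBE h)).1 rfl
    refine ⟨insert c₀ B, ?_, ?_, ?_⟩
    · intro x hx
      rcases Finset.mem_insert.mp hx with rfl | hx
      · exact hc₀E
      · exact (Finset.mem_erase.mp (hBE hx)).2
    · rw [Finset.card_insert_of_notMem hc₀B, hBcard]
    · intro c hc d hd
      rcases Finset.mem_insert.mp hc with rfl | hc
      · exact hc₀max d (Finset.mem_sdiff.mp hd).1
      · apply hB c hc
        have hd' := Finset.mem_sdiff.mp hd
        refine Finset.mem_sdiff.mpr ⟨Finset.mem_erase.mpr ⟨?_, hd'.1⟩, ?_⟩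
        · intro h; exact hd'.2 (h ▸ Finset.mem_insert_self c₀ B)
        · intro h; exact hd'.2 (Finset.mem_insert_of_mem h)

/-- Per-vote inequality. -/
lemma pervote {C : Type*} [DecidableEq C] (S'' S' : Finset C) (c p : C)
    (h1 : c ∈ S'' → c ∈ S') (h2 : p ∈ S' → p ∈ S'') (h3 : p ∉ S'' → S'' = S')
    (h4 : S''.card ≤ S'.card) :
    (if c ∈ S'' then (S''.card : ℚ)⁻¹ else 0) - (if p ∈ S'' then (S''.card : ℚ)⁻¹ else 0)
      ≤ (if c ∈ S' then (S'.card : ℚ)⁻¹ else 0) - (if p ∈ S' then (S'.card : ℚ)⁻¹ else 0) := by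
  by_cases hp'' : p ∈ S''
  · have hpos'' : (0 : ℚ) < (S''.card : ℚ) := by
      exact_mod_cast Finset.card_pos.mpr ⟨p, hp''⟩
    by_cases hp' : p ∈ S'
    · have hpos' : (0 : ℚ) < (S'.card : ℚ) := by
        exact_mod_cast Finset.card_pos.mpr ⟨p, hp'⟩
      by_cases hc'' : c ∈ S''
      · simp [hc'', h1 hc'', hp'', hp']
      · by_cases hc' : c ∈ S'
        · simp only [if_neg hc'', if_pos hp'', if_pos hc', if_pos hp']
          have : (0:ℚ) ≤ (S''.card : ℚ)⁻¹ := le_of_lt (inv_pos.mpr hpos'')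
          linarith
        · simp only [if_neg hc'', if_pos hp'', if_neg hc', if_pos hp']
          have : (S'.card : ℚ)⁻¹ ≤ (S''.card : ℚ)⁻¹ :=
            inv_anti₀ hpos'' (by exact_mod_cast h4)
          linarith
    · have h1' : (if c ∈ S'' then (S''.card : ℚ)⁻¹ else 0) - (S''.card : ℚ)⁻¹ ≤ 0 := by
        by_cases hc'' : c ∈ S'' <;> simp [hc'', le_of_lt (inv_pos.mpr hpos'')]
      have h2' : (0:ℚ) ≤ (if c ∈ S' then (S'.card : ℚ)⁻¹ else 0) := by
        by_cases hc' : c ∈ S'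
        · simp only [if_pos hc']; positivity
        · simp [hc']
      simp only [if_pos hp'', if_neg hp']
      linarith
  · rw [h3 hp'']

/-- Under SAV with unit-cost additions, bribery by adding approvals can be assumed
to add approvals only for the preferred candidate: if applying a set `A` of `b` approval
additions (each adding a candidate to a vote not already approving it) puts `p` into some
SAV-winning size-`k` committee, then there is a set `A'` of at most `b` additions, each adding
an approval for `p` to a vote not approving `p`, doing the same. -/
theorem stmt_8 {C : Type*} [Fintype C] [DecidableEq C] {n : ℕ} (V : Fin n → Finset C)
    (p : C) (k : ℕ) (hk1 : 1 ≤ k) (hk2 : k ≤ Fintype.card C)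
    (A : Finset (Fin n × C)) (hA : ∀ a ∈ A, a.2 ∉ V a.1)
    (h : ∃ W : Finset C, p ∈ W ∧ SAVWinning (applyAdds V A) k W) :
    ∃ A' : Finset (Fin n), A'.card ≤ A.card ∧ (∀ i ∈ A', p ∉ V i) ∧
      ∃ W : Finset C, p ∈ W ∧
        SAVWinning (fun i => if i ∈ A' then insert p (V i) else V i) k W := by
    classical
  obtain ⟨W, hpW, hWcard, hWwin⟩ := h
  set A' : Finset (Fin n) := (A.image Prod.fst).filter (fun i => p ∉ V i) with hA'def
  set V'' : Fin n → Finset C := fun i => if i ∈ A' then insert p (V i) else V i with hV''def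
  have hA'mem : ∀ i : Fin n, i ∈ A' ↔ (∃ c, (i, c) ∈ A) ∧ p ∉ V i := by
    intro i
    simp only [hA'def, Finset.mem_filter, Finset.mem_image, Prod.exists]
    constructor
    · rintro ⟨⟨a, b, hab, hfst⟩, hp⟩
      exact ⟨⟨b, by simpa [hfst] using hab⟩, hp⟩
    · rintro ⟨⟨c, hc⟩, hp⟩
      exact ⟨⟨i, c, hc, rfl⟩, hp⟩
  -- key score comparison
  have key : ∀ c : C, c ≠ p →
      savScore V'' c - savScore V'' p
        ≤ savScore (applyAdds V A) c - savScore (applyAdds V A) p := by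
    intro c hcp
    unfold savScore
    rw [← Finset.sum_sub_distrib, ← Finset.sum_sub_distrib]
    apply Finset.sum_le_sum
    intro i _
    apply pervote
    · -- h1
      intro hc
      by_cases hi : i ∈ A'
      · simp only [hV''def, if_pos hi] at hc
        rcases Finset.mem_insert.mp hc with h | h
        · exact absurd h hcp
        · exact Finset.mem_union_left _ h
      · simp only [hV''def, if_neg hi] at hc
        exact Finset.mem_union_left _ hc
    · -- h2
      intro hp
      rcases Finset.mem_union.mp hp with h | h
      · have hi : i ∉ A' := fun hi => ((hA'mem i).mp hi).2 h
        simp only [hV''def, if_neg hi]; exact h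
      · obtain ⟨a, ha, ha2⟩ := Finset.mem_image.mp h
        have ha1 : a.1 = i := (Finset.mem_filter.mp ha).2
        have haA : a ∈ A := (Finset.mem_filter.mp ha).1
        have hipA : (i, p) ∈ A := by
          have : a = (i, p) := Prod.ext ha1 ha2
          exact this ▸ haA
        have hpV : p ∉ V i := hA (i, p) hipA
        have hi : i ∈ A' := (hA'mem i).mpr ⟨⟨p, hipA⟩, hpV⟩
        simp only [hV''def, if_pos hi]
        exact Finset.mem_insert_self _ _
    · -- h3
      intro hp
      by_cases hi : i ∈ A'
      · exact absurd (by simp only [hV''def, if_pos hi]; exact Finset.mem_insert_self _ _) hp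
      · simp only [hV''def, if_neg hi] at hp ⊢
        have hfilt : A.filter (fun a => a.1 = i) = ∅ := by
          rw [Finset.filter_eq_empty_iff]
          intro a ha h1
          exact hi ((hA'mem i).mpr ⟨⟨a.2, by simpa [← h1] using ha⟩, hp⟩)
        simp [applyAdds, hfilt]
    · -- h4
      by_cases hi : i ∈ A'
      · obtain ⟨⟨c₀, hc₀⟩, hpV⟩ := (hA'mem i).mp hi
        have hc₀V : c₀ ∉ V i := hA (i, c₀) hc₀
        have hsub : insert c₀ (V i) ⊆ applyAdds V A i := by
          intro x hx
          rcases Finset.mem_insert.mp hx with rfl | hx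
          · refine Finset.mem_union_right _ (Finset.mem_image.mpr ⟨(i, x), ?_, rfl⟩)
            exact Finset.mem_filter.mpr ⟨hc₀, rfl⟩
          · exact Finset.mem_union_left _ hx
        have h1 : (V i).card + 1 ≤ (applyAdds V A i).card := by
          have := Finset.card_le_card hsub
          rwa [Finset.card_insert_of_notMem hc₀V] at this
        simp only [hV''def, if_pos hi]
        rw [Finset.card_insert_of_notMem hpV]
        exact h1
      · simp only [hV''def, if_neg hi]
        exact Finset.card_le_card (Finset.subset_union_left)
  set s'' : C → ℚ := savScore V'' with hs''
  set s' : C → ℚ := savScore (applyAdds V A) with hs'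
  set G'' : Finset C := Finset.univ.filter (fun c => s'' p < s'' c) with hG''
  have hpG'' : p ∉ G'' := by simp [hG'']
  have hGsub : G'' ⊆ W.erase p := by
    intro c hc
    have hlt : s'' p < s'' c := (Finset.mem_filter.mp hc).2
    have hcp : c ≠ p := by rintro rfl; exact lt_irrefl _ hlt
    have hlt' : s' p < s' c := by have := key c hcp; linarith
    have hcW : c ∈ W := by
      by_contra hcW
      exact absurd (hWwin p hpW c hcW) (not_le.mpr hlt')
    exact Finset.mem_erase.mpr ⟨hcp, hcW⟩
  have hGcard : G''.card ≤ k - 1 := by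
    have := Finset.card_le_card hGsub
    rwa [Finset.card_erase_of_mem hpW, hWcard] at this
  set T : Finset C := insert p G'' with hT
  have hTcard : T.card ≤ k := by
    rw [hT, Finset.card_insert_of_notMem hpG'']
    omega
  have hEcard : k - T.card ≤ (Finset.univ \ T).card := by
    rw [Finset.card_sdiff_of_subset (Finset.subset_univ T), Finset.card_univ]
    omega
  obtain ⟨B, hBE, hBcard, hBmax⟩ := topk (k - T.card) (Finset.univ \ T) s'' hEcard
  have hdisj : Disjoint T B := by
    rw [Finset.disjoint_right]
    intro x hxB
    exact (Finset.mem_sdiff.mp (hBE hxB)).2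
  refine ⟨A', ?_, ?_, T ∪ B, Finset.mem_union_left _ (Finset.mem_insert_self _ _), ?_, ?_⟩
  · exact le_trans (Finset.card_filter_le _ _) (Finset.card_image_le)
  · intro i hi; exact ((hA'mem i).mp hi).2
  · rw [Finset.card_union_of_disjoint hdisj, hBcard]; omega
  · intro c hc d hd
    have hdT : d ∉ T := fun h => hd (Finset.mem_union_left _ h)
    have hdB : d ∉ B := fun h => hd (Finset.mem_union_right _ h)
    have hdp : d ≠ p := fun h => hdT (h ▸ Finset.mem_insert_self _ _)
    have hdG : d ∉ G'' := fun h => hdT (Finset.mem_insert_of_mem h)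
    have hdle : s'' d ≤ s'' p := by
      by_contra hlt
      exact hdG (Finset.mem_filter.mpr ⟨Finset.mem_univ d, not_le.mp hlt⟩)
    rcases Finset.mem_union.mp hc with hcT | hcB
    · rcases Finset.mem_insert.mp hcT with rfl | hcG
      · exact hdle
      · exact le_of_lt (lt_of_le_of_lt hdle (Finset.mem_filter.mp hcG).2)
    · exact hBmax c hcB d (Finset.mem_sdiff.mpr ⟨Finset.mem_sdiff.mpr ⟨Finset.mem_univ d, hdT⟩, hdB⟩)
end

section
/- PAV is unanimous: let (C,V) be an approval election and suppose candidate c ∈ C is approved by every voter. Then for every size-k committee W with c ∉ W and every x ∈ W, the PAV score of (W \ {x}) ∪ {c} is at least the PAV score of W; consequently, for every committee size k with 1 ≤ k ≤ |C|, candidate c belongs to some PAV-winning committee of size k. -/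
/-- The harmonicSum number `1 + 1/2 + … + 1/m` (with `harmonicSum 0 = 0`). -/
def harmonicSum (m : ℕ) : ℚ :=
  ∑ t ∈ Finset.range m, (1 : ℚ) / (t + 1)

/-- PAV score of committee `W`: each voter `v` contributes `1 + 1/2 + … + 1/|v ∩ W|`. -/
def pavScore {C : Type*} [DecidableEq C] {n : ℕ} (V : Fin n → Finset C) (W : Finset C) : ℚ :=
  ∑ i : Fin n, harmonicSum ((V i ∩ W).card)

/-- `W` is a PAV-winning committee of size `k`: it has `k` members and maximum PAV score
among all size-`k` committees. -/
def PAVWinning {C : Type*} [DecidableEq C] {n : ℕ}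
    (V : Fin n → Finset C) (k : ℕ) (W : Finset C) : Prop :=
  W.card = k ∧ ∀ W' : Finset C, W'.card = k → pavScore V W' ≤ pavScore V W

lemma harmonicSum_mono {a b : ℕ} (h : a ≤ b) : harmonicSum a ≤ harmonicSum b := by
  unfold harmonicSum
  apply Finset.sum_le_sum_of_subset_of_nonneg (Finset.range_subset_range.2 h)
  intro t _ _
  positivity

lemma swap_score {C : Type*} [DecidableEq C] {n : ℕ} (V : Fin n → Finset C)
    (c : C) (hc : ∀ i : Fin n, c ∈ V i) (W : Finset C) (hcW : c ∉ W)
    (x : C) (hx : x ∈ W) :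
    pavScore V W ≤ pavScore V (insert c (W.erase x)) := by
  apply Finset.sum_le_sum
  intro i _
  apply harmonicSum_mono
  have h1 : V i ∩ insert c (W.erase x) = insert c (V i ∩ W.erase x) := by
    rw [Finset.inter_insert_of_mem (hc i)]
  have hcE : c ∉ V i ∩ W.erase x := by
    simp only [Finset.mem_inter, Finset.mem_erase]
    rintro ⟨-, -, h⟩; exact hcW h
  rw [h1, Finset.card_insert_of_notMem hcE]
  have h2 : V i ∩ W ⊆ insert x (V i ∩ W.erase x) := by
    intro a ha
    rcases Finset.mem_inter.1 ha with ⟨ha1, ha2⟩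
    by_cases hax : a = x
    · exact Finset.mem_insert.2 (Or.inl hax)
    · exact Finset.mem_insert.2 (Or.inr (Finset.mem_inter.2 ⟨ha1, Finset.mem_erase.2 ⟨hax, ha2⟩⟩))
  calc (V i ∩ W).card ≤ (insert x (V i ∩ W.erase x)).card := Finset.card_le_card h2
    _ ≤ (V i ∩ W.erase x).card + 1 := Finset.card_insert_le _ _

/-- PAV is unanimous: if candidate `c` is approved by every voter, then for every
size-`k` committee `W` not containing `c` and every `x ∈ W`, the PAV score of
`(W \ {x}) ∪ {c}` is at least that of `W`; consequently, for every committee size `k` with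
`1 ≤ k ≤ |C|`, candidate `c` belongs to some PAV-winning committee of size `k`. -/
theorem stmt_14 {C : Type*} [Fintype C] [DecidableEq C] {n : ℕ} (V : Fin n → Finset C)
    (c : C) (hc : ∀ i : Fin n, c ∈ V i) :
    ∀ k : ℕ, 1 ≤ k → k ≤ Fintype.card C →
      (∀ W : Finset C, W.card = k → c ∉ W → ∀ x ∈ W,
        pavScore V W ≤ pavScore V (insert c (W.erase x))) ∧
      ∃ W : Finset C, c ∈ W ∧ PAVWinning V k W := by
  intro k hk1 hk2
  constructor
  · intro W _ hcW x hx
    exact swap_score V c hc W hcW x hx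
  · -- find a maximizer over size-k committees
    have hne : (Finset.univ.powersetCard k : Finset (Finset C)).Nonempty := by
      obtain ⟨W, hW⟩ := Finset.exists_subset_card_eq (s := (Finset.univ : Finset C)) (n := k)
        (by simpa using hk2)
      exact ⟨W, Finset.mem_powersetCard.2 ⟨hW.1, hW.2⟩⟩
    obtain ⟨W, hWmem, hWmax⟩ := Finset.exists_max_image _ (pavScore V) hne
    have hWcard : W.card = k := (Finset.mem_powersetCard.1 hWmem).2
    have hmax : ∀ W' : Finset C, W'.card = k → pavScore V W' ≤ pavScore V W := by
      intro W' hW'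
      exact hWmax W' (Finset.mem_powersetCard.2 ⟨Finset.subset_univ _, hW'⟩)
    by_cases hcW : c ∈ W
    · exact ⟨W, hcW, hWcard, hmax⟩
    · obtain ⟨x, hx⟩ := Finset.card_pos.1 (hWcard ▸ hk1)
      refine ⟨insert c (W.erase x), Finset.mem_insert_self _ _, ?_, ?_⟩
      · rw [Finset.card_insert_of_notMem (fun h => hcW (Finset.erase_subset _ _ h)),
          Finset.card_erase_of_mem hx, hWcard]
        omega
      · intro W' hW'
        exact le_trans (hmax W' hW') (swap_score V c hc W hcW x hx)
end
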